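/- arXiv:1801.08533 — 6 statements merged into one kernel-verified Lean document; each statement's English description precedes it below -/
import Mathlib

section
/- For every γ > 0 there exists N₀ such that for all integers N ≥ N₀, every x ∈ ℤ_N, and every integer n with n ≥ 10γ N log N, the simple random walk on the cylinder ℤ_N × ℤ started at (x, 0) satisfies P(τ^y_n < 3γ N² log N) ≤ N^{−γ}. -/
/-!
Only the vertical coordinate matters, and it is a lazy symmetric walk with steps in `{-1, 0, 1}`.
Split the event `τ_n < T` according to the time `t` of the first visit to `n`: the increments
after `t` are independent of that event and form a symmetric sum, which is nonnegative with
probability at least `1/2`. This reflection argument gives `P(τ_n < T) ≤ 2 P(S_T ≥ n)`, and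
Hoeffding's inequality bounds `P(S_T ≥ n)` by `exp (-n² / (2T))`. With `T ≈ 3γN² log N` and
`n ≥ 10γN log N` the exponent is at most `-12 γ log N`, far below `-γ log N` once `γ log N ≥ 1`.
-/

open MeasureTheory ProbabilityTheory Real Finset
open scoped ENNReal

namespace ProbabilityTheory

section Symmetric

variable {Ω α : Type*} [MeasurableSpace Ω] {P : Measure Ω} [MeasurableSpace α]

lemma IdentDistrib.add_of_indepFun [AddMonoid α] [MeasurableAdd₂ α] [IsFiniteMeasure P]
    {U V U' V' : Ω → α} (hU : Measurable U) (hV : Measurable V) (hU' : Measurable U')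
    (hV' : Measurable V') (hUV : IndepFun U V P) (hUV' : IndepFun U' V' P)
    (hUU' : IdentDistrib U U' P P) (hVV' : IdentDistrib V V' P P) :
    IdentDistrib (U + V) (U' + V') P P where
  aemeasurable_fst := (hU.add hV).aemeasurable
  aemeasurable_snd := (hU'.add hV').aemeasurable
  map_eq := by
    rw [hUV.map_add_eq_map_conv_map hU hV, hUV'.map_add_eq_map_conv_map hU' hV',
      hUU'.map_eq, hVV'.map_eq]

lemma identDistrib_sum_neg [AddCommGroup α] [MeasurableAdd₂ α] [MeasurableNeg α]
    [IsFiniteMeasure P] {ι : Type*} [DecidableEq ι] {Y : ι → Ω → α}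
    (hY : ∀ i, Measurable (Y i)) (hind : iIndepFun Y P)
    (hsymm : ∀ i, IdentDistrib (Y i) (-Y i) P P) (s : Finset ι) :
    IdentDistrib (∑ i ∈ s, Y i) (-∑ i ∈ s, Y i) P P := by
  induction s using Finset.induction_on with
  | empty =>
    rw [sum_empty, neg_zero]
    exact IdentDistrib.refl aemeasurable_const
  | insert j s hjs ih =>
    have hsum : Measurable (∑ i ∈ s, Y i) := by
      simpa only [← Finset.sum_apply] using Finset.measurable_sum s fun i _ => hY i
    have hjs_indep : IndepFun (Y j) (∑ i ∈ s, Y i) P :=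
      (hind.indepFun_finsetSum_of_notMem hY hjs).symm
    rw [sum_insert hjs, neg_add]
    exact (hsymm j).add_of_indepFun (hY j) hsum (hY j).neg hsum.neg hjs_indep
      (hjs_indep.comp measurable_neg measurable_neg) ih

lemma integral_eq_zero_of_identDistrib_neg {Z : Ω → ℝ} (h : IdentDistrib Z (-Z) P P) :
    P[Z] = 0 := by
  have h' := h.integral_eq
  rw [Pi.neg_def, integral_neg] at h'
  linarith

lemma one_le_two_mul_measure_nonneg [IsProbabilityMeasure P] {Z : Ω → ℤ}
    (h : IdentDistrib Z (-Z) P P) : 1 ≤ 2 * P {ω | 0 ≤ Z ω} := by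
  have hflip : P {ω | 0 ≤ Z ω} = P {ω | Z ω ≤ 0} := by
    simpa using h.measure_mem_eq (s := {x | 0 ≤ x}) .of_discrete
  calc (1 : ENNReal) = P Set.univ := measure_univ.symm
    _ ≤ P ({ω | 0 ≤ Z ω} ∪ {ω | Z ω ≤ 0}) :=
        measure_mono fun ω _ => (le_total 0 (Z ω)).elim Or.inl Or.inr
    _ ≤ P {ω | 0 ≤ Z ω} + P {ω | Z ω ≤ 0} := measure_union_le _ _
    _ = 2 * P {ω | 0 ≤ Z ω} := by rw [← hflip, two_mul]

end Symmetric

section IntegerWalk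

variable {Ω : Type*} {Y : ℕ → Ω → ℤ}

def firstHitAt (Y : ℕ → Ω → ℤ) (n : ℤ) (t : ℕ) : Set Ω :=
  {ω | ∑ i ∈ range t, Y i ω = n ∧ ∀ s < t, ∑ i ∈ range s, Y i ω ≠ n}

lemma measurableSet_firstHitAt {m : MeasurableSpace Ω} {n : ℤ} {t : ℕ}
    (hY : ∀ i < t, Measurable[m] (Y i)) : MeasurableSet[m] (firstHitAt Y n t) := by
  have hsum : ∀ s ≤ t, Measurable[m] fun ω => ∑ i ∈ range s, Y i ω := fun s hs =>
    Finset.measurable_sum _ fun i hi => hY i ((mem_range.1 hi).trans_le hs)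
  have hfirst : firstHitAt Y n t
      = {ω | ∑ i ∈ range t, Y i ω = n} ∩ ⋂ s ∈ range t, {ω | ∑ i ∈ range s, Y i ω = n}ᶜ := by
    ext ω; simp [firstHitAt]
  rw [hfirst]
  exact (hsum t le_rfl (measurableSet_singleton n)).inter <|
    Finset.measurableSet_biInter _ fun s hs =>
      (hsum s (mem_range.1 hs).le (measurableSet_singleton n)).compl

variable [MeasurableSpace Ω] {P : Measure Ω}

lemma measure_firstHitAt_inter_eq_mul (hY : ∀ i, Measurable (Y i)) (hind : iIndepFun Y P)
    (n : ℤ) (t T : ℕ) :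
    P (firstHitAt Y n t ∩ {ω | 0 ≤ ∑ i ∈ Ico t T, Y i ω})
      = P (firstHitAt Y n t) * P {ω | 0 ≤ ∑ i ∈ Ico t T, Y i ω} := by
  let m : Set ℕ → MeasurableSpace Ω := fun S =>
    ⨆ i ∈ S, MeasurableSpace.comap (Y i) inferInstance
  have hY_le : ∀ {S : Set ℕ}, ∀ i ∈ S, Measurable[m S] (Y i) := fun i hi =>
    Measurable.of_comap_le <|
      le_iSup₂ (f := fun i (_ : i ∈ _) => MeasurableSpace.comap (Y i) inferInstance) i hi
  have hindep : Indep (m (range t)) (m (Ico t T)) P :=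
    indep_iSup_of_disjoint (fun i => (hY i).comap_le) hind
      (by simp [Set.disjoint_left]; omega)
  refine (Indep_iff _ _ P).1 hindep _ _
    (measurableSet_firstHitAt fun i hi => hY_le i (by simpa using hi)) ?_
  exact Finset.measurable_sum _ (fun i hi => hY_le i hi) measurableSet_Ici

lemma measure_exists_sum_range_eq_le_two_mul [IsProbabilityMeasure P] (hY : ∀ i, Measurable (Y i))
    (hind : iIndepFun Y P) (hsymm : ∀ i, IdentDistrib (Y i) (-Y i) P P) (n : ℤ) (T : ℕ) :
    P {ω | ∃ t < T, ∑ i ∈ range t, Y i ω = n} ≤ 2 * P {ω | n ≤ ∑ i ∈ range T, Y i ω} := by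
  set A := firstHitAt Y n
  set B : ℕ → Set Ω := fun t => {ω | 0 ≤ ∑ i ∈ Ico t T, Y i ω}
  have hcover : {ω | ∃ t < T, ∑ i ∈ range t, Y i ω = n} ⊆ ⋃ t ∈ range T, A t := by
    rintro ω ⟨t, htT, ht⟩
    have hex : ∃ t, ∑ i ∈ range t, Y i ω = n := ⟨t, ht⟩
    exact Set.mem_biUnion (mem_range.2 ((Nat.find_min' hex ht).trans_lt htT))
      ⟨Nat.find_spec hex, fun s hs => Nat.find_min hex hs⟩
  have hdisj : (↑(range T) : Set ℕ).PairwiseDisjoint fun t => A t ∩ B t := by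
    intro u _ v _ huv
    refine Set.disjoint_left.2 fun ω hu hv => ?_
    rcases huv.lt_or_gt with h | h
    exacts [hv.1.2 u h hu.1.1, hu.1.2 v h hv.1.1]
  have hAB : ⋃ t ∈ range T, A t ∩ B t ⊆ {ω | n ≤ ∑ i ∈ range T, Y i ω} := by
    simp only [Set.iUnion_subset_iff, mem_range]
    rintro t ht ω ⟨⟨hAt, -⟩, hBt⟩
    change 0 ≤ ∑ i ∈ Ico t T, Y i ω at hBt
    change n ≤ ∑ i ∈ range T, Y i ω
    rw [range_eq_Ico, ← sum_Ico_consecutive _ (Nat.zero_le t) ht.le, ← range_eq_Ico, hAt]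
    omega
  have hB : ∀ t, 1 ≤ 2 * P (B t) := fun t => one_le_two_mul_measure_nonneg <| by
    simpa [← Finset.sum_apply] using identDistrib_sum_neg hY hind hsymm (Ico t T)
  calc P {ω | ∃ t < T, ∑ i ∈ range t, Y i ω = n}
      ≤ ∑ t ∈ range T, P (A t) := (measure_mono hcover).trans (measure_biUnion_finset_le _ _)
    _ ≤ ∑ t ∈ range T, 2 * P (A t ∩ B t) := by
        gcongr with t
        rw [measure_firstHitAt_inter_eq_mul hY hind, mul_left_comm]
        exact le_mul_of_one_le_right' (hB t)
    _ = 2 * P (⋃ t ∈ range T, A t ∩ B t) := by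
        rw [← mul_sum, measure_biUnion_finset hdisj fun t _ =>
          (measurableSet_firstHitAt fun i _ => hY i).inter
            (Finset.measurable_sum _ (fun i _ => hY i) measurableSet_Ici)]
    _ ≤ 2 * P {ω | n ≤ ∑ i ∈ range T, Y i ω} := by gcongr

lemma measure_le_sum_range_le_exp [IsProbabilityMeasure P] (hY : ∀ i, Measurable (Y i))
    (hind : iIndepFun Y P) (hsymm : ∀ i, IdentDistrib (Y i) (-Y i) P P)
    (hbdd : ∀ i, ∀ᵐ ω ∂P, |Y i ω| ≤ 1) {n : ℤ} (hn : 0 ≤ n) (T : ℕ) :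
    P {ω | n ≤ ∑ i ∈ range T, Y i ω} ≤ ENNReal.ofReal (exp (-n ^ 2 / (2 * T))) := by
  let Z : ℕ → Ω → ℝ := fun i ω => Y i ω
  have hcast : Measurable (fun k : ℤ => (k : ℝ)) := .of_discrete
  have hsubG : ∀ i < T, HasSubgaussianMGF (Z i) 1 P := fun i _ => by
    have hneg : (fun k : ℤ => (k : ℝ)) ∘ (-Y i) = -Z i := by funext ω; simp [Z]
    have hZsymm : IdentDistrib (Z i) (-Z i) P P := hneg ▸ (hsymm i).comp hcast
    have hZ := hasSubgaussianMGF_of_mem_Icc_of_integral_eq_zero (X := Z i) (a := -1) (b := 1)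
      (hcast.comp (hY i)).aemeasurable
      (by
        filter_upwards [hbdd i] with ω hω
        simp only [Z, Set.mem_Icc]
        exact_mod_cast abs_le.1 hω)
      (integral_eq_zero_of_identDistrib_neg hZsymm)
    -- the constant `(‖1 - (-1)‖₊ / 2) ^ 2` of Hoeffding's lemma is `1`
    norm_num at hZ
    exact hZ
  have hZind : iIndepFun Z P := hind.comp (fun _ k => (k : ℝ)) fun _ => hcast
  have hZsum := HasSubgaussianMGF.measure_sum_range_ge_le_of_iIndepFun hZind hsubG (ε := n)
    (by exact_mod_cast hn)
  rw [ENNReal.le_ofReal_iff_toReal_le (measure_ne_top _ _) (exp_pos _).le]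
  simpa [measureReal_def, Z, ← Int.cast_sum] using hZsum

end IntegerWalk

section UniformLaw

variable {Ω α : Type*} [MeasurableSpace Ω] {P : Measure Ω} [IsProbabilityMeasure P]
  [MeasurableSpace α] [MeasurableSingletonClass α] {X : Ω → α} {S : Finset α}

lemma ae_mem_of_measure_preimage_singleton_eq_inv_card (hX : Measurable X) (hS : S.Nonempty)
    (h : ∀ s ∈ S, P (X ⁻¹' {s}) = (#S : ℝ≥0∞)⁻¹) : ∀ᵐ ω ∂P, X ω ∈ S := by
  have hmass : P (X ⁻¹' S) = 1 := by
    rw [← sum_measure_preimage_singleton S fun s _ => hX (measurableSet_singleton s),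
      sum_congr rfl h, sum_const, nsmul_eq_mul, ENNReal.mul_inv_cancel] <;> simp [hS.ne_empty]
  exact ae_iff.2 ((prob_compl_eq_zero_iff (hX S.measurableSet)).2 hmass)

lemma identDistrib_equiv_comp_of_measure_preimage_singleton_eq_inv_card [Countable α]
    (hX : Measurable X) (hS : S.Nonempty) (h : ∀ s ∈ S, P (X ⁻¹' {s}) = (#S : ℝ≥0∞)⁻¹)
    (e : α ≃ α) (he : Measurable e) (heS : ∀ a, e a ∈ S ↔ a ∈ S) :
    IdentDistrib X (e ∘ X) P P where
  aemeasurable_fst := hX.aemeasurable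
  aemeasurable_snd := (he.comp hX).aemeasurable
  map_eq := Measure.ext_of_singleton fun a => by
    have hpre : e ⁻¹' {a} = {e.symm a} := by ext; simp [Equiv.eq_symm_apply]
    have hnull : ∀ b ∉ S, P (X ⁻¹' {b}) = 0 := fun b hb =>
      measure_mono_null (fun ω (hω : X ω = b) => show X ω ∉ S from hω ▸ hb)
        (ae_iff.1 (ae_mem_of_measure_preimage_singleton_eq_inv_card hX hS h))
    rw [Measure.map_apply hX (measurableSet_singleton a),
      Measure.map_apply (he.comp hX) (measurableSet_singleton a), Set.preimage_comp, hpre]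
    by_cases ha : a ∈ S
    · rw [h a ha, h _ (by rwa [← heS, e.apply_symm_apply])]
    · rw [hnull a ha, hnull _ (by rwa [← heS, e.apply_symm_apply])]

end UniformLaw

end ProbabilityTheory

def unitSteps : Finset (ℤ × ℤ) := {(1, 0), (-1, 0), (0, 1), (0, -1)}

section UnitSteps

variable {Ω : Type*} [MeasurableSpace Ω] {P : Measure Ω} {X : Ω → ℤ × ℤ}

lemma measure_preimage_singleton_eq_inv_card_unitSteps
    (h : ∀ s ∈ ({(1, 0), (-1, 0), (0, 1), (0, -1)} : Set (ℤ × ℤ)), P {ω | X ω = s} = 1 / 4) :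
    ∀ s ∈ unitSteps, P (X ⁻¹' {s}) = (#unitSteps : ℝ≥0∞)⁻¹ := by
  intro s hs
  rw [show #unitSteps = 4 from rfl, Nat.cast_ofNat, ← one_div]
  exact h s (by simpa [unitSteps] using hs)

lemma identDistrib_snd_neg_of_unitSteps [IsProbabilityMeasure P] (hX : Measurable X)
    (h : ∀ s ∈ unitSteps, P (X ⁻¹' {s}) = (#unitSteps : ℝ≥0∞)⁻¹) :
    IdentDistrib (fun ω => (X ω).2) (-fun ω => (X ω).2) P P :=
  (identDistrib_equiv_comp_of_measure_preimage_singleton_eq_inv_card hX ⟨(1, 0), by decide⟩ h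
    ((Equiv.refl ℤ).prodCongr (Equiv.neg ℤ)) .of_discrete
    (by rintro ⟨a, b⟩; simp [unitSteps]; omega)).comp measurable_snd

lemma ae_abs_snd_le_one_of_unitSteps [IsProbabilityMeasure P] (hX : Measurable X)
    (h : ∀ s ∈ unitSteps, P (X ⁻¹' {s}) = (#unitSteps : ℝ≥0∞)⁻¹) :
    ∀ᵐ ω ∂P, |(X ω).2| ≤ 1 := by
  filter_upwards [ae_mem_of_measure_preimage_singleton_eq_inv_card hX ⟨(1, 0), by decide⟩ h]
    with ω hω
  simp only [unitSteps, mem_insert, mem_singleton] at hω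
  rcases hω with hs | hs | hs | hs <;> simp [hs]

end UnitSteps

lemma two_mul_exp_neg_sq_div_le_rpow_neg {γ N n T : ℝ} (hN : 1 ≤ N) (hγN : 1 ≤ γ * log N)
    (hn : 10 * γ * N * log N ≤ n) (hT0 : 0 < T) (hT : T ≤ 3 * γ * N ^ 2 * log N + 1) :
    2 * exp (-n ^ 2 / (2 * T)) ≤ N ^ (-γ) := by
  set a := γ * log N
  have hN2 : 1 ≤ N ^ 2 := one_le_pow₀ hN
  have hT4 : T ≤ 4 * a * N ^ 2 := by nlinarith
  have hn2 : (10 * a * N) ^ 2 ≤ n ^ 2 := pow_le_pow_left₀ (by positivity) (by linarith) 2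
  have hdecay : 12 * a ≤ n ^ 2 / (2 * T) := by
    rw [le_div_iff₀ (by positivity)]
    have : 24 * a * T ≤ 24 * a * (4 * a * N ^ 2) := by gcongr
    nlinarith
  calc 2 * exp (-n ^ 2 / (2 * T)) ≤ exp 1 * exp (-n ^ 2 / (2 * T)) := by
        gcongr; linarith [add_one_le_exp 1]
    _ = exp (1 - n ^ 2 / (2 * T)) := by rw [← exp_add, neg_div, sub_eq_add_neg]
    _ ≤ exp (log N * -γ) := by gcongr; linarith
    _ = N ^ (-γ) := (rpow_def_of_pos (by positivity) _).symm

/-- For every `γ > 0` there exists `N₀` such that for all integers `N ≥ N₀`, every `x ∈ ℤ_N`,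
and every integer `n` with `n ≥ 10 γ N log N`, the simple random walk on the cylinder
`ℤ_N × ℤ` started at `(x, 0)` satisfies `P(τ^y_n < 3 γ N² log N) ≤ N^{-γ}`.

The walk is modelled by i.i.d. steps `X i : Ω → ℤ × ℤ`, uniform on the four unit steps
`{(1,0), (-1,0), (0,1), (0,-1)}`; the cylinder position at time `t` is
`(x + (Σ steps).1 mod N, (Σ steps).2)`.  The event `τ^y_n < T` is expressed as the existence
of a time `t < T` at which the vertical coordinate equals `n`. -/
theorem stmt0 (γ : ℝ) (hγ : 0 < γ) :
    ∃ N₀ : ℕ, ∀ N : ℕ, N₀ ≤ N →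
    ∀ (Ω : Type) (_ : MeasurableSpace Ω) (P : Measure Ω), IsProbabilityMeasure P →
    ∀ X : ℕ → Ω → ℤ × ℤ,
      (∀ i, Measurable (X i)) →
      iIndepFun X P →
      (∀ i, ∀ s ∈ ({(1, 0), (-1, 0), (0, 1), (0, -1)} : Set (ℤ × ℤ)),
        P {ω | X i ω = s} = 1 / 4) →
    ∀ _x : ZMod N, ∀ n : ℤ,
      10 * γ * N * Real.log N ≤ (n : ℝ) →
      P {ω | ∃ t : ℕ, (t : ℝ) < 3 * γ * N ^ 2 * Real.log N ∧
          (∑ i ∈ Finset.range t, X i ω).2 = n}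
        ≤ ENNReal.ofReal ((N : ℝ) ^ (-γ)) := by
  refine ⟨⌈exp γ⁻¹⌉₊, fun N hN Ω _ P _ X hX hind hstep _ n hn => ?_⟩
  have hN : exp γ⁻¹ ≤ N := Nat.ceil_le.1 hN
  have hN1 : 1 ≤ (N : ℝ) := (one_le_exp (inv_nonneg.2 hγ.le)).trans hN
  have hγN : 1 ≤ γ * log N := by
    rw [← inv_mul_le_iff₀ hγ, mul_one]
    exact (le_log_iff_exp_le (by positivity)).2 hN
  have hlogN : 0 < log N := pos_of_mul_pos_right (one_pos.trans_le hγN) hγ.le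
  set T := ⌈3 * γ * N ^ 2 * log N⌉₊
  have hT0 : (0 : ℝ) < T := Nat.cast_pos.2 (Nat.ceil_pos.2 (by positivity))
  have hT : (T : ℝ) ≤ 3 * γ * N ^ 2 * log N + 1 := (Nat.ceil_lt_add_one (by positivity)).le
  let Y : ℕ → Ω → ℤ := fun i ω => (X i ω).2
  have hY : ∀ i, Measurable (Y i) := fun i => measurable_snd.comp (hX i)
  have hYind : iIndepFun Y P := hind.comp _ fun _ => measurable_snd
  have hstep' := fun i => measure_preimage_singleton_eq_inv_card_unitSteps (hstep i)
  have hYsymm : ∀ i, IdentDistrib (Y i) (-Y i) P P :=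
    fun i => identDistrib_snd_neg_of_unitSteps (hX i) (hstep' i)
  have hn0 : 0 ≤ n := by exact_mod_cast (by positivity : 0 ≤ 10 * γ * N * log N).trans hn
  calc P {ω | ∃ t : ℕ, (t : ℝ) < 3 * γ * N ^ 2 * log N ∧ (∑ i ∈ range t, X i ω).2 = n}
      ≤ P {ω | ∃ t < T, ∑ i ∈ range t, Y i ω = n} := measure_mono fun ω ⟨t, ht, hω⟩ =>
        ⟨t, Nat.lt_ceil.2 ht, by simpa [Y, Prod.snd_sum] using hω⟩
    _ ≤ 2 * P {ω | n ≤ ∑ i ∈ range T, Y i ω} :=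
        measure_exists_sum_range_eq_le_two_mul hY hYind hYsymm n T
    _ ≤ 2 * ENNReal.ofReal (exp (-n ^ 2 / (2 * T))) := by
        gcongr
        exact measure_le_sum_range_le_exp hY hYind hYsymm
          (fun i => ae_abs_snd_le_one_of_unitSteps (hX i) (hstep' i)) hn0 T
    _ ≤ ENNReal.ofReal (N ^ (-γ)) := by
        rw [← ENNReal.ofReal_ofNat 2, ← ENNReal.ofReal_mul zero_le_two]
        exact ENNReal.ofReal_le_ofReal (two_mul_exp_neg_sq_div_le_rpow_neg hN1 hγN hn hT0 hT)
end

section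
/- For the simple random walk on ℤ started at 0 and any integer n ≥ 1, the first hitting time τ_n of n is almost surely finite, and for every z ∈ (0,1) one has E[z^{τ_n}] = ((1 − √(1 − z²))/z)^n; in particular E[z^{τ_1}] = (1 − √(1 − z²))/z. -/
/-!
For `0 < z < 1` let `a = (1 + √(1 - z²)) / z`, the root `a > 1` of `z (a + a⁻¹) = 2`. Then each
step multiplies `a ^ S_t * z ^ t` by the independent factor `z * a ^ X_t` of mean one, so this
process stopped at `τ_n` has expectation `1` at every time. Before `τ_n` the walk stays below `n`,
so the stopped process lies in `[0, a ^ n]`; it converges to `a ^ n * z ^ τ_n` on `{τ_n < ∞}` and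
to `0` elsewhere. Dominated convergence gives
`E[z ^ τ_n; τ_n < ∞] = a⁻ⁿ = ((1 - √(1 - z²)) / z) ^ n`, and letting `z ↑ 1` gives
`P(τ_n < ∞) = 1`.
-/

open MeasureTheory ProbabilityTheory Filter Topology

namespace SimpleRandomWalk

section Walk

variable {Ω : Type*} (X : ℕ → Ω → ℤ)

def walk (t : ℕ) (ω : Ω) : ℤ := ∑ i ∈ Finset.range t, X i ω

noncomputable def hitTime (n : ℕ) (ω : Ω) : ℕ := sInf {t | walk X t ω = n}

def hitBy (n t : ℕ) : Set Ω := {ω | ∃ s ≤ t, walk X s ω = n}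

def hitEver (n : ℕ) : Set Ω := {ω | ∃ t, walk X t ω = n}

open Classical in
/-- `a ^ S_{t ∧ τ} * z ^ (t ∧ τ)` for `τ = hitTime X n`; the test `ω ∈ hitBy X n t` cannot be
replaced by `τ ≤ t`, since `hitTime` is `sInf ∅ = 0` on paths that never reach `n`. -/
noncomputable def stoppedExp (n : ℕ) (a z : ℝ) (t : ℕ) (ω : Ω) : ℝ :=
  if ω ∈ hitBy X n t then a ^ n * z ^ hitTime X n ω else a ^ walk X t ω * z ^ t

variable {X} {n t : ℕ} {ω : Ω} {a z : ℝ}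

@[simp] lemma walk_zero : walk X 0 ω = 0 := by simp [walk]

lemma walk_succ : walk X (t + 1) ω = walk X t ω + X t ω := Finset.sum_range_succ ..

lemma hitTime_eq (h : walk X t ω = n) (hlt : ∀ s < t, walk X s ω ≠ n) : hitTime X n ω = t :=
  (Nat.sInf_le h).antisymm <| not_lt.1 fun hτ =>
    hlt _ hτ (Nat.sInf_mem (s := {t | walk X t ω = n}) ⟨t, h⟩)

lemma walk_lt_of_notMem_hitBy (hn : 0 < n) (hX : ∀ i < t, X i ω = 1 ∨ X i ω = -1)
    (h : ω ∉ hitBy X n t) : walk X t ω < n := by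
  induction t with
  | zero => simpa using hn
  | succ t ih =>
    have hlt := ih (fun i hi => hX i (by omega)) fun ⟨s, hs, hsn⟩ => h ⟨s, by omega, hsn⟩
    have hne : walk X (t + 1) ω ≠ n := fun hsn => h ⟨t + 1, le_rfl, hsn⟩
    rw [walk_succ] at hne ⊢
    rcases hX t (by omega) with hx | hx <;> omega

lemma stoppedExp_zero (hn : 0 < n) : stoppedExp X n a z 0 ω = 1 := by
  have : ω ∉ hitBy X n 0 := by
    rintro ⟨s, hs, hsn⟩
    rw [Nat.le_zero.1 hs, walk_zero] at hsn
    omega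
  simp [stoppedExp, this]

lemma stoppedExp_succ (ha : a ≠ 0) :
    stoppedExp X n a z (t + 1) ω = stoppedExp X n a z t ω +
      (hitBy X n t)ᶜ.indicator (stoppedExp X n a z t) ω * (z * a ^ X t ω - 1) := by
  by_cases hH : ω ∈ hitBy X n t
  · have hH' : ω ∈ hitBy X n (t + 1) := let ⟨s, hs, hsn⟩ := hH; ⟨s, by omega, hsn⟩
    simp [stoppedExp, hH, hH']
  have hG : stoppedExp X n a z t ω * (z * a ^ X t ω) = a ^ walk X (t + 1) ω * z ^ (t + 1) := by
    rw [stoppedExp, if_neg hH, walk_succ, zpow_add₀ ha, pow_succ]; ring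
  rw [Set.indicator_of_mem (Set.mem_compl hH), mul_sub, mul_one, add_sub_cancel, hG, stoppedExp]
  split_ifs with hH'
  · obtain ⟨s, hs, hsn⟩ := hH'
    have hst : s = t + 1 := by
      by_contra hst; exact hH ⟨s, by omega, hsn⟩
    subst hst
    rw [hitTime_eq hsn fun s hs hsn => hH ⟨s, by omega, hsn⟩, hsn, zpow_natCast]
  · rfl

lemma norm_stoppedExp_le (hn : 0 < n) (ha : 1 ≤ a) (hz0 : 0 ≤ z) (hz1 : z ≤ 1)
    (hX : ∀ i < t, X i ω = 1 ∨ X i ω = -1) : ‖stoppedExp X n a z t ω‖ ≤ a ^ n := by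
  have ha0 : 0 < a := by linarith
  rw [stoppedExp]
  split_ifs with hH
  · rw [Real.norm_of_nonneg (by positivity)]
    exact mul_le_of_le_one_right (by positivity) (pow_le_one₀ hz0 hz1)
  · rw [Real.norm_of_nonneg (by positivity), ← zpow_natCast]
    exact (mul_le_of_le_one_right (by positivity) (pow_le_one₀ hz0 hz1)).trans
      (zpow_le_zpow_right₀ ha (walk_lt_of_notMem_hitBy hn hX hH).le)

lemma tendsto_stoppedExp (hn : 0 < n) (ha : 1 ≤ a) (hz0 : 0 ≤ z) (hz1 : z < 1)
    (hX : ∀ i, X i ω = 1 ∨ X i ω = -1) :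
    Tendsto (fun t => stoppedExp X n a z t ω) atTop
      (𝓝 (a ^ n * (hitEver X n).indicator (fun ω => z ^ hitTime X n ω) ω)) := by
  by_cases hA : ω ∈ hitEver X n
  · obtain ⟨s, hs⟩ := hA
    rw [Set.indicator_of_mem (show ω ∈ hitEver X n from ⟨s, hs⟩)]
    exact tendsto_atTop_of_eventually_const fun t ht => if_pos ⟨s, ht, hs⟩
  · rw [Set.indicator_of_notMem hA, mul_zero]
    refine squeeze_zero_norm (fun t => ?_)
      (by simpa using (tendsto_pow_atTop_nhds_zero_of_lt_one hz0 hz1).const_mul (a ^ n))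
    have hH : ω ∉ hitBy X n t := fun ⟨s, _, hs⟩ => hA ⟨s, hs⟩
    rw [stoppedExp, if_neg hH, norm_mul, Real.norm_of_nonneg (by positivity), norm_pow,
      Real.norm_of_nonneg hz0, ← zpow_natCast a]
    gcongr
    exact (walk_lt_of_notMem_hitBy hn (fun i _ => hX i) hH).le

abbrev history (X : ℕ → Ω → ℤ) (t : ℕ) : MeasurableSpace Ω :=
  ⨆ i ∈ Set.Iio t, MeasurableSpace.comap (X i) inferInstance

lemma history_le_succ : history X t ≤ history X (t + 1) :=
  biSup_mono fun _ hi => Nat.lt_succ_of_lt hi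

lemma measurable_history {i : ℕ} (hi : i < t) : Measurable[history X t] (X i) :=
  (comap_measurable (X i)).mono (le_biSup (fun j => MeasurableSpace.comap (X j) _) hi) le_rfl

lemma measurable_walk_history {s : ℕ} (hs : s ≤ t) : Measurable[history X t] (walk X s) :=
  Finset.measurable_fun_sum _ fun _ hi => measurable_history ((Finset.mem_range.1 hi).trans_le hs)

lemma measurableSet_hitBy_history : MeasurableSet[history X t] (hitBy X n t) := by
  have : hitBy X n t = ⋃ s ∈ Finset.range (t + 1), walk X s ⁻¹' {(n : ℤ)} := by
    ext ω; simp [hitBy]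
  rw [this]
  exact Finset.measurableSet_biUnion _ fun s hs =>
    measurable_walk_history (Nat.lt_succ_iff.1 (Finset.mem_range.1 hs)) (measurableSet_singleton _)

lemma measurable_stoppedExp_history (hn : 0 < n) (ha : a ≠ 0) :
    Measurable[history X t] (stoppedExp X n a z t) := by
  induction t with
  | zero =>
    rw [show stoppedExp X n a z 0 = fun _ => 1 from funext fun _ => stoppedExp_zero hn]
    exact measurable_const
  | succ t ih =>
    rw [show stoppedExp X n a z (t + 1) = _ from funext fun _ => stoppedExp_succ ha]
    have hG := ih.mono history_le_succ le_rfl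
    refine hG.add (.mul ((hG.indicator ?_)) ?_)
    · exact (history_le_succ _ measurableSet_hitBy_history).compl
    · exact (measurable_of_countable fun k : ℤ => z * a ^ k - 1).comp
        (measurable_history (Nat.lt_succ_self t))

end Walk

section Measurability

variable {Ω : Type*} [mΩ : MeasurableSpace Ω] {X : ℕ → Ω → ℤ} {n t : ℕ}

lemma history_le (hmeas : ∀ i, Measurable (X i)) : history X t ≤ mΩ :=
  iSup₂_le fun i _ => (hmeas i).comap_le

lemma measurableSet_hitEver (hmeas : ∀ i, Measurable (X i)) : MeasurableSet (hitEver X n) := by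
  have : hitEver X n = ⋃ t, hitBy X n t := by
    ext ω
    simp only [hitEver, hitBy, Set.mem_iUnion]
    exact ⟨fun ⟨t, ht⟩ => ⟨t, t, le_rfl, ht⟩, fun ⟨_, s, _, hs⟩ => ⟨s, hs⟩⟩
  rw [this]
  exact .iUnion fun t => history_le hmeas _ measurableSet_hitBy_history

lemma indepFun_of_measurable_history {P : Measure Ω} (hmeas : ∀ i, Measurable (X i))
    (hindep : iIndepFun X P) {U : Ω → ℝ} (hU : Measurable[history X t] U) :
    IndepFun U (X t) P := by
  rw [IndepFun_iff_Indep]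
  have := indep_iSup_of_disjoint (fun i => (hmeas i).comap_le)
    ((iIndepFun_iff_iIndep _ _ _).1 hindep) (S := Set.Iio t) (T := {t})
    (Set.disjoint_singleton_right.2 (lt_irrefl t))
  exact indep_of_indep_of_le this hU.comap_le
    (le_biSup (fun j => MeasurableSpace.comap (X j) _) rfl)

end Measurability

section StepLaw

variable {Ω : Type*} [MeasurableSpace Ω] {P : Measure Ω} [IsProbabilityMeasure P] {Y : Ω → ℤ}

lemma ae_eq_one_or_eq_neg_one (hY : Measurable Y)
    (h : P {ω | Y ω = 1} = 1 / 2 ∧ P {ω | Y ω = -1} = 1 / 2) :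
    ∀ᵐ ω ∂P, Y ω = 1 ∨ Y ω = -1 := by
  have hA : MeasurableSet {ω | Y ω = 1} := hY (measurableSet_singleton 1)
  have hB : MeasurableSet {ω | Y ω = -1} := hY (measurableSet_singleton (-1))
  have hdisj : Disjoint {ω | Y ω = 1} {ω | Y ω = -1} :=
    Set.disjoint_left.2 fun ω h1 h2 => by simp_all
  refine (ae_iff_measure_eq (p := fun ω => Y ω = 1 ∨ Y ω = -1)
    (hA.union hB).nullMeasurableSet).2 ?_
  rw [measure_univ]
  exact (measure_union hdisj hB).trans (by rw [h.1, h.2, ENNReal.add_halves])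

lemma integral_comp_eq_average (hY : Measurable Y)
    (h : P {ω | Y ω = 1} = 1 / 2 ∧ P {ω | Y ω = -1} = 1 / 2) (f : ℤ → ℝ) :
    ∫ ω, f (Y ω) ∂P = (f 1 + f (-1)) / 2 := by
  have hA : MeasurableSet {ω | Y ω = 1} := hY (measurableSet_singleton 1)
  have hB : MeasurableSet {ω | Y ω = -1} := hY (measurableSet_singleton (-1))
  have hf : (fun ω => f (Y ω)) =ᵐ[P] fun ω =>
      {ω | Y ω = 1}.indicator (fun _ => f 1) ω + {ω | Y ω = -1}.indicator (fun _ => f (-1)) ω := by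
    filter_upwards [ae_eq_one_or_eq_neg_one hY h] with ω hω
    rcases hω with hω | hω <;> simp [hω]
  rw [integral_congr_ae hf, integral_add ((integrable_const _).indicator hA)
    ((integrable_const _).indicator hB), integral_indicator_const _ hA,
    integral_indicator_const _ hB, measureReal_def, measureReal_def, h.1, h.2]
  simp only [one_div, ENNReal.toReal_inv, ENNReal.toReal_ofNat, smul_eq_mul]
  ring

end StepLaw

section HittingTime

variable {Ω : Type*} [MeasurableSpace Ω] {P : Measure Ω} [IsProbabilityMeasure P]
  {X : ℕ → Ω → ℤ} {n : ℕ} {a z : ℝ}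

lemma ae_forall_eq_one_or_eq_neg_one (hmeas : ∀ i, Measurable (X i))
    (hstep : ∀ i, P {ω | X i ω = 1} = 1 / 2 ∧ P {ω | X i ω = -1} = 1 / 2) :
    ∀ᵐ ω ∂P, ∀ i, X i ω = 1 ∨ X i ω = -1 :=
  ae_all_iff.2 fun i => ae_eq_one_or_eq_neg_one (hmeas i) (hstep i)

lemma measurable_stoppedExp (hmeas : ∀ i, Measurable (X i)) (hn : 0 < n) (ha : a ≠ 0) (t : ℕ) :
    Measurable (stoppedExp X n a z t) :=
  (measurable_stoppedExp_history hn ha).mono (history_le hmeas) le_rfl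

lemma ae_norm_stoppedExp_le (hmeas : ∀ i, Measurable (X i))
    (hstep : ∀ i, P {ω | X i ω = 1} = 1 / 2 ∧ P {ω | X i ω = -1} = 1 / 2)
    (hn : 0 < n) (ha : 1 ≤ a) (hz0 : 0 ≤ z) (hz1 : z ≤ 1) (t : ℕ) :
    ∀ᵐ ω ∂P, ‖stoppedExp X n a z t ω‖ ≤ a ^ n := by
  filter_upwards [ae_forall_eq_one_or_eq_neg_one hmeas hstep] with ω hω
  exact norm_stoppedExp_le hn ha hz0 hz1 fun i _ => hω i

lemma integrable_stoppedExp (hmeas : ∀ i, Measurable (X i))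
    (hstep : ∀ i, P {ω | X i ω = 1} = 1 / 2 ∧ P {ω | X i ω = -1} = 1 / 2)
    (hn : 0 < n) (ha : 1 ≤ a) (hz0 : 0 ≤ z) (hz1 : z ≤ 1) (t : ℕ) :
    Integrable (stoppedExp X n a z t) P :=
  (integrable_const (a ^ n)).mono'
    (measurable_stoppedExp hmeas hn (by positivity) t).aestronglyMeasurable
    (ae_norm_stoppedExp_le hmeas hstep hn ha hz0 hz1 t)

lemma integral_stoppedExp_succ (hmeas : ∀ i, Measurable (X i)) (hindep : iIndepFun X P)
    (hstep : ∀ i, P {ω | X i ω = 1} = 1 / 2 ∧ P {ω | X i ω = -1} = 1 / 2)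
    (hn : 0 < n) (ha : 1 ≤ a) (hz0 : 0 ≤ z) (hz1 : z ≤ 1) (hmean : z * (a + a⁻¹) = 2) (t : ℕ) :
    ∫ ω, stoppedExp X n a z (t + 1) ω ∂P = ∫ ω, stoppedExp X n a z t ω ∂P := by
  have ha0 : a ≠ 0 := by positivity
  -- The increment `U * V (X t)` has a factor determined by the first `t` steps and an
  -- independent factor of mean zero.
  set U := (hitBy X n t)ᶜ.indicator (stoppedExp X n a z t)
  set V : ℤ → ℝ := fun k => z * a ^ k - 1
  have hU : Measurable[history X t] U :=
    (measurable_stoppedExp_history hn ha0).indicator measurableSet_hitBy_history.compl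
  have hV : Measurable V := measurable_of_countable V
  have hmeanV : ∫ ω, V (X t ω) ∂P = 0 := by
    rw [integral_comp_eq_average (hmeas t) (hstep t)]
    simp only [V, zpow_one, zpow_neg_one]
    linear_combination hmean / 2
  have hUV : ∫ ω, U ω * V (X t ω) ∂P = 0 := by
    have hind : IndepFun U (fun ω => V (X t ω)) P :=
      (indepFun_of_measurable_history hmeas hindep hU).comp measurable_id hV
    rw [hind.integral_fun_mul_eq_mul_integral
      (hU.mono (history_le hmeas) le_rfl).aestronglyMeasurable
      (hV.comp (hmeas t)).aestronglyMeasurable, hmeanV, mul_zero]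
  rw [← sub_eq_zero, ← integral_sub (integrable_stoppedExp hmeas hstep hn ha hz0 hz1 _)
    (integrable_stoppedExp hmeas hstep hn ha hz0 hz1 _), ← hUV]
  congr 1 with ω
  rw [stoppedExp_succ ha0, add_sub_cancel_left]

lemma integral_stoppedExp (hmeas : ∀ i, Measurable (X i)) (hindep : iIndepFun X P)
    (hstep : ∀ i, P {ω | X i ω = 1} = 1 / 2 ∧ P {ω | X i ω = -1} = 1 / 2)
    (hn : 0 < n) (ha : 1 ≤ a) (hz0 : 0 ≤ z) (hz1 : z ≤ 1) (hmean : z * (a + a⁻¹) = 2) (t : ℕ) :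
    ∫ ω, stoppedExp X n a z t ω ∂P = 1 := by
  induction t with
  | zero => simp [stoppedExp_zero hn]
  | succ t ih => rw [integral_stoppedExp_succ hmeas hindep hstep hn ha hz0 hz1 hmean, ih]

lemma mul_integral_indicator_hitEver (hmeas : ∀ i, Measurable (X i)) (hindep : iIndepFun X P)
    (hstep : ∀ i, P {ω | X i ω = 1} = 1 / 2 ∧ P {ω | X i ω = -1} = 1 / 2)
    (hn : 0 < n) (ha : 1 ≤ a) (hz0 : 0 ≤ z) (hz1 : z < 1) (hmean : z * (a + a⁻¹) = 2) :
    a ^ n * ∫ ω, (hitEver X n).indicator (fun ω => z ^ hitTime X n ω) ω ∂P = 1 := by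
  have hlim := tendsto_integral_of_dominated_convergence (μ := P) (fun _ => a ^ n)
    (fun t => (measurable_stoppedExp hmeas hn (by positivity) t).aestronglyMeasurable)
    (integrable_const _) (ae_norm_stoppedExp_le hmeas hstep hn ha hz0 hz1.le)
    (by filter_upwards [ae_forall_eq_one_or_eq_neg_one hmeas hstep] with ω hω
        exact tendsto_stoppedExp hn ha hz0 hz1 hω)
  simp_rw [integral_stoppedExp hmeas hindep hstep hn ha hz0 hz1.le hmean] at hlim
  rw [← integral_const_mul]
  exact tendsto_nhds_unique hlim tendsto_const_nhds

lemma integral_indicator_hitEver (hmeas : ∀ i, Measurable (X i)) (hindep : iIndepFun X P)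
    (hstep : ∀ i, P {ω | X i ω = 1} = 1 / 2 ∧ P {ω | X i ω = -1} = 1 / 2)
    (hn : 0 < n) (hz0 : 0 < z) (hz1 : z < 1) :
    ∫ ω, (hitEver X n).indicator (fun ω => z ^ hitTime X n ω) ω ∂P
      = ((1 - √(1 - z ^ 2)) / z) ^ n := by
  set r := √(1 - z ^ 2)
  have hr : r ^ 2 = 1 - z ^ 2 := Real.sq_sqrt (by nlinarith)
  have hinv : ((1 + r) / z)⁻¹ = (1 - r) / z :=
    inv_eq_of_mul_eq_one_right (by field_simp; linear_combination -hr)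
  have ha : 1 ≤ (1 + r) / z := (one_le_div hz0).2 (by linarith [Real.sqrt_nonneg (1 - z ^ 2)])
  have hmean : z * ((1 + r) / z + ((1 + r) / z)⁻¹) = 2 := by
    rw [hinv]; field_simp; ring
  have h := mul_integral_indicator_hitEver hmeas hindep hstep hn ha hz0.le hz1 hmean
  rw [eq_inv_of_mul_eq_one_right h, ← inv_pow, hinv]

lemma ae_mem_hitEver (hmeas : ∀ i, Measurable (X i)) (hindep : iIndepFun X P)
    (hstep : ∀ i, P {ω | X i ω = 1} = 1 / 2 ∧ P {ω | X i ω = -1} = 1 / 2) (hn : 0 < n) :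
    ∀ᵐ ω ∂P, ω ∈ hitEver X n := by
  have hA := measurableSet_hitEver (n := n) hmeas
  have hle : ∀ z ∈ Set.Ioo (0 : ℝ) 1, ((1 - √(1 - z ^ 2)) / z) ^ n ≤ P.real (hitEver X n) := by
    rintro z ⟨hz0, hz1⟩
    rw [← integral_indicator_hitEver hmeas hindep hstep hn hz0 hz1, ← integral_indicator_one hA]
    refine integral_mono_of_nonneg (.of_forall fun ω => ?_) ((integrable_const 1).indicator hA)
      (.of_forall fun ω => Set.indicator_le_indicator (pow_le_one₀ hz0.le hz1.le))
    exact Set.indicator_nonneg (fun _ _ => by positivity) ω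
  have hcont : ContinuousAt (fun z : ℝ => ((1 - √(1 - z ^ 2)) / z) ^ n) 1 := by
    fun_prop (disch := norm_num)
  have hone : 1 ≤ P.real (hitEver X n) := by
    refine le_of_tendsto (a := 1) ?_ (eventually_of_mem (Ioo_mem_nhdsLT one_pos) hle)
    simpa using hcont.tendsto.mono_left nhdsWithin_le_nhds
  rw [ae_mem_iff_measure_eq hA.nullMeasurableSet, measure_univ, ← ENNReal.toReal_eq_one_iff]
  exact le_antisymm measureReal_le_one hone

end HittingTime

end SimpleRandomWalk

open SimpleRandomWalk in
/-- For the simple random walk on `ℤ` started at `0` and any integer `n ≥ 1`, the first hitting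
time `τ_n` of `n` is almost surely finite, and for every `z ∈ (0,1)` one has
`E[z^{τ_n}] = ((1 − √(1 − z²))/z)^n`; in particular `E[z^{τ_1}] = (1 − √(1 − z²))/z`. -/
theorem stmt3
    (Ω : Type) (_ : MeasurableSpace Ω) (P : Measure Ω) (hP : IsProbabilityMeasure P)
    (X : ℕ → Ω → ℤ)
    (hmeas : ∀ i, Measurable (X i))
    (hindep : iIndepFun X P)
    (hstep : ∀ i, P {ω | X i ω = 1} = 1 / 2 ∧ P {ω | X i ω = -1} = 1 / 2)
    (n : ℕ) (hn : 1 ≤ n)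
    (τ : Ω → ℕ)
    (hτ : ∀ ω, τ ω = sInf {t : ℕ | (∑ i ∈ Finset.range t, X i ω) = (n : ℤ)}) :
    (∀ᵐ ω ∂P, ∃ t : ℕ, (∑ i ∈ Finset.range t, X i ω) = (n : ℤ)) ∧
    (∀ z : ℝ, 0 < z → z < 1 →
      (∫ ω, z ^ τ ω ∂P) = ((1 - Real.sqrt (1 - z ^ 2)) / z) ^ n) ∧
    (∀ z : ℝ, 0 < z → z < 1 → n = 1 →
      (∫ ω, z ^ τ ω ∂P) = (1 - Real.sqrt (1 - z ^ 2)) / z) := by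
  obtain rfl : τ = hitTime X n := funext hτ
  have hfinite := ae_mem_hitEver hmeas hindep hstep hn
  have hgen : ∀ z : ℝ, 0 < z → z < 1 →
      ∫ ω, z ^ hitTime X n ω ∂P = ((1 - √(1 - z ^ 2)) / z) ^ n := fun z hz0 hz1 => by
    rw [← integral_indicator_hitEver hmeas hindep hstep hn hz0 hz1]
    refine integral_congr_ae ?_
    filter_upwards [hfinite] with ω hω
    exact (Set.indicator_of_mem hω fun ω => z ^ hitTime X n ω).symm
  refine ⟨hfinite, hgen, fun z hz0 hz1 hn1 => ?_⟩
  subst hn1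
  simpa using hgen z hz0 hz1
end

section
/- For every γ > 0 there exists N₀ such that for all integers N ≥ N₀ and all integers n with n ≥ 10γ N log N, the simple random walk on ℤ started at 0 satisfies P(τ_n < 9γ N² log N) ≤ N^{−5γ/4}. -/
/-!
Since each step has `E exp (λ X) = cosh λ ≥ 1`, the process `exp (λ S_k)` is a nonnegative
submartingale, and Doob's maximal inequality gives
`P (max_{k ≤ M} S_k ≥ a) ≤ cosh λ ^ M / exp (λ a) ≤ exp (M λ² / 2 - λ a) = exp (-a² / 2M)`
for `λ = a / M`. Hitting `n ≥ 10 γ N log N` before time `M ≈ 9 γ N² log N` forces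
`max_{k ≤ M} S_k ≥ n`, which therefore has probability at most about `N ^ (-50 γ / 9)`.
-/

open MeasureTheory ProbabilityTheory Finset Real
open scoped ENNReal

section ExpPartialSum

variable {Ω : Type*} [MeasurableSpace Ω] {P : Measure Ω} [IsProbabilityMeasure P]
  {Y : ℕ → Ω → ℝ} {t : ℝ}

theorem integrable_exp_mul_partialSum (hY : ∀ i, Measurable (Y i)) (hindep : iIndepFun Y P)
    (hint : ∀ i, Integrable (fun ω => exp (t * Y i ω)) P) (k : ℕ) :
    Integrable (fun ω => exp (t * ∑ i ∈ range k, Y i ω)) P := by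
  simpa [Finset.sum_apply] using hindep.integrable_exp_mul_sum hY (s := range k) fun i _ => hint i

theorem submartingale_exp_mul_partialSum (hY : ∀ i, Measurable (Y i)) (hindep : iIndepFun Y P)
    (hint : ∀ i, Integrable (fun ω => exp (t * Y i ω)) P) (hmgf : ∀ i, 1 ≤ mgf (Y i) P t) :
    Submartingale (fun k ω => exp (t * ∑ i ∈ range (k + 1), Y i ω))
      (Filtration.natural Y fun i => (hY i).stronglyMeasurable) P := by
  set ℱ := Filtration.natural Y fun i => (hY i).stronglyMeasurable
  set F : ℕ → Ω → ℝ := fun k ω => exp (t * ∑ i ∈ range (k + 1), Y i ω)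
  have hF_int (k : ℕ) : Integrable (F k) P := integrable_exp_mul_partialSum hY hindep hint (k + 1)
  have hF_adapted : StronglyAdapted ℱ F := fun k =>
    continuous_exp.comp_stronglyMeasurable <| StronglyMeasurable.const_mul
      (Finset.stronglyMeasurable_fun_sum _ fun i hi => (Filtration.stronglyAdapted_natural _ i).mono
        (ℱ.mono (Nat.lt_succ_iff.mp (mem_range.mp hi)))) t
  refine submartingale_nat hF_adapted hF_int fun k => ?_
  have hF_succ : F (k + 1) = F k * fun ω => exp (t * Y (k + 1) ω) := by
    ext ω
    simp only [F, Pi.mul_apply, sum_range_succ _ (k + 1), mul_add, exp_add]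
  have hpull : P[F (k + 1)|ℱ k] =ᵐ[P] F k * P[fun ω => exp (t * Y (k + 1) ω)|ℱ k] := by
    rw [hF_succ]
    exact condExp_mul_of_stronglyMeasurable_left (hF_adapted k) (hF_succ ▸ hF_int (k + 1)) (hint _)
  have hindep_step : P[fun ω => exp (t * Y (k + 1) ω)|ℱ k] =ᵐ[P] fun _ => mgf (Y (k + 1)) P t :=
    condExp_indep_eq (hY (k + 1)).comap_le (ℱ.le k)
      ((measurable_exp.comp (measurable_id.const_mul t)).comp
        (comap_measurable (Y (k + 1)))).stronglyMeasurable
      (hindep.indep_comap_natural_of_lt _ k.lt_succ_self)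
  filter_upwards [hpull, hindep_step] with ω h1 h2
  rw [h1, Pi.mul_apply, h2]
  exact le_mul_of_one_le_right (exp_pos _).le (hmgf _)

theorem measure_exists_le_partialSum_le (ht : 0 ≤ t) (hY : ∀ i, Measurable (Y i))
    (hindep : iIndepFun Y P) (hint : ∀ i, Integrable (fun ω => exp (t * Y i ω)) P)
    (hmgf : ∀ i, 1 ≤ mgf (Y i) P t) (a : ℝ) (M : ℕ) :
    P {ω | ∃ k ≤ M, a ≤ ∑ i ∈ range (k + 1), Y i ω}
      ≤ ENNReal.ofReal ((∏ i ∈ range (M + 1), mgf (Y i) P t) / exp (t * a)) := by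
  set F : ℕ → Ω → ℝ := fun k ω => exp (t * ∑ i ∈ range (k + 1), Y i ω)
  set ε : NNReal := (exp (t * a)).toNNReal
  have hε : (ε : ℝ) = exp (t * a) := Real.coe_toNNReal _ (exp_pos _).le
  set s := {ω | (ε : ℝ) ≤ (range (M + 1)).sup' nonempty_range_add_one fun k => F k ω}
  have hsub : {ω | ∃ k ≤ M, a ≤ ∑ i ∈ range (k + 1), Y i ω} ⊆ s := by
    rintro ω ⟨k, hkM, hk⟩
    calc (ε : ℝ) = exp (t * a) := hε
      _ ≤ F k ω := exp_le_exp.2 (mul_le_mul_of_nonneg_left hk ht)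
      _ ≤ _ := le_sup' (fun k => F k ω) (mem_range.2 (Nat.lt_succ_of_le hkM))
  have hF_integral : ∫ ω, F M ω ∂P = ∏ i ∈ range (M + 1), mgf (Y i) P t := by
    rw [← hindep.mgf_sum hY, mgf]
    simp only [F, Finset.sum_apply]
  have hdoob : (ε : ℝ≥0∞) * P s ≤ ENNReal.ofReal (∏ i ∈ range (M + 1), mgf (Y i) P t) :=
    calc (ε : ℝ≥0∞) * P s ≤ ENNReal.ofReal (∫ ω in s, F M ω ∂P) :=
          maximal_ineq (submartingale_exp_mul_partialSum hY hindep hint hmgf)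
            (fun _ _ => (exp_pos _).le) M
      _ ≤ ENNReal.ofReal (∫ ω, F M ω ∂P) := ENNReal.ofReal_le_ofReal <|
          setIntegral_le_integral (integrable_exp_mul_partialSum hY hindep hint _)
            (ae_of_all _ fun _ => (exp_pos _).le)
      _ = _ := by rw [hF_integral]
  calc P {ω | ∃ k ≤ M, a ≤ ∑ i ∈ range (k + 1), Y i ω} ≤ P s := measure_mono hsub
    _ ≤ ENNReal.ofReal (∏ i ∈ range (M + 1), mgf (Y i) P t) / ε :=
        (ENNReal.le_div_iff_mul_le (Or.inl (by simpa [ε] using exp_pos _))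
          (Or.inl ENNReal.coe_ne_top)).2 (by rwa [mul_comm])
    _ = _ := by rw [ENNReal.ofReal_div_of_pos (exp_pos _)]; rfl

end ExpPartialSum

section Rademacher

variable {Ω : Type*} [MeasurableSpace Ω] {P : Measure Ω} [IsProbabilityMeasure P]

theorem ae_eq_one_or_eq_neg_one {Z : Ω → ℤ} (hZ : Measurable Z)
    (h1 : P {ω | Z ω = 1} = 1 / 2) (h2 : P {ω | Z ω = -1} = 1 / 2) :
    ∀ᵐ ω ∂P, Z ω = 1 ∨ Z ω = -1 := by
  have hdisj : Disjoint {ω | Z ω = 1} {ω | Z ω = -1} :=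
    Set.disjoint_left.2 fun ω (h1 : Z ω = 1) (h2 : Z ω = -1) => by omega
  have hunion : P ({ω | Z ω = 1} ∪ {ω | Z ω = -1}) = 1 := by
    rw [measure_union hdisj (hZ (measurableSet_singleton _)), h1, h2, ENNReal.add_halves]
  exact (prob_compl_eq_zero_iff ((hZ (measurableSet_singleton _)).union
    (hZ (measurableSet_singleton _)))).2 hunion

theorem mgf_intCast_eq_cosh {Z : Ω → ℤ} (hZ : Measurable Z)
    (h1 : P {ω | Z ω = 1} = 1 / 2) (h2 : P {ω | Z ω = -1} = 1 / 2) (t : ℝ) :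
    mgf (fun ω => (Z ω : ℝ)) P t = cosh t := by
  have hA : MeasurableSet {ω | Z ω = 1} := hZ (measurableSet_singleton _)
  have hB : MeasurableSet {ω | Z ω = -1} := hZ (measurableSet_singleton _)
  have hsplit : (fun ω => exp (t * Z ω)) =ᵐ[P]
      {ω | Z ω = 1}.indicator (fun _ => exp t) + {ω | Z ω = -1}.indicator (fun _ => exp (-t)) := by
    filter_upwards [ae_eq_one_or_eq_neg_one hZ h1 h2] with ω hω
    rcases hω with h | h <;> simp [Set.indicator, h]
  rw [mgf, integral_congr_ae hsplit, integral_add' ((integrable_const _).indicator hA)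
    ((integrable_const _).indicator hB), integral_indicator_const _ hA,
    integral_indicator_const _ hB, measureReal_def, measureReal_def, h1, h2, cosh_eq]
  norm_num
  ring

theorem measure_exists_le_partialSum_le_exp {X : ℕ → Ω → ℤ} (hX : ∀ i, Measurable (X i))
    (hindep : iIndepFun X P)
    (hd : ∀ i, P {ω | X i ω = 1} = 1 / 2 ∧ P {ω | X i ω = -1} = 1 / 2) {a : ℝ} (ha : 0 ≤ a)
    (M : ℕ) :
    P {ω | ∃ k ≤ M, a ≤ ∑ i ∈ range (k + 1), (X i ω : ℝ)}
      ≤ ENNReal.ofReal (exp (-(a ^ 2 / (2 * (M + 1))))) := by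
  set K : ℝ := M + 1
  set t := a / K
  have hY : ∀ i, Measurable fun ω => (X i ω : ℝ) := fun i => measurable_from_top.comp (hX i)
  have hmgf (i : ℕ) : mgf (fun ω => (X i ω : ℝ)) P t = cosh t :=
    mgf_intCast_eq_cosh (hX i) (hd i).1 (hd i).2 t
  refine (measure_exists_le_partialSum_le (by positivity) hY
    (hindep.comp _ fun _ => measurable_from_top)
    (fun i => integrable_exp_mul_of_mem_Icc (a := -1) (b := 1) (hY i).aemeasurable <| by
      filter_upwards [ae_eq_one_or_eq_neg_one (hX i) (hd i).1 (hd i).2] with ω hω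
      rcases hω with h | h <;> simp [h])
    (fun i => (hmgf i).symm ▸ one_le_cosh t) a M).trans (ENNReal.ofReal_le_ofReal ?_)
  -- `t = a / K` minimises `K t² / 2 - t a`
  calc (∏ i ∈ range (M + 1), mgf (fun ω => (X i ω : ℝ)) P t) / exp (t * a)
      = cosh t ^ (M + 1) / exp (t * a) := by simp only [hmgf, prod_const, card_range]
    _ ≤ exp (t ^ 2 / 2) ^ (M + 1) / exp (t * a) := by gcongr; exact cosh_le_exp_half_sq t
    _ = exp (K * (t ^ 2 / 2) - t * a) := by rw [← exp_nat_mul, exp_sub]; push_cast; rfl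
    _ = exp (-(a ^ 2 / (2 * K))) := by
        have hK : 0 < K := by positivity
        congr 1; simp only [t]; field_simp; ring

end Rademacher

theorem five_mul_div_four_mul_le_sq_div {γ N L n K : ℝ} (hN : 1 ≤ N) (hγN : 1 ≤ γ * N)
    (hL : 1 ≤ L) (hn : 10 * γ * N * L ≤ n) (hK : 0 < K) (hKT : K ≤ 9 * γ * N ^ 2 * L + 2) :
    5 * γ / 4 * L ≤ n ^ 2 / (2 * K) := by
  have hγ : 0 < γ := by nlinarith
  rw [le_div_iff₀ (by positivity)]
  have hn_sq : (10 * γ * N * L) ^ 2 ≤ n ^ 2 := pow_le_pow_left₀ (by positivity) hn 2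
  have hγL : 0 ≤ γ * L := by positivity
  nlinarith [mul_le_mul_of_nonneg_left hKT (by positivity : (0 : ℝ) ≤ 5 / 2 * γ * L),
    mul_le_mul_of_nonneg_left (one_le_mul_of_one_le_of_one_le hγN hL)
      (by positivity : (0 : ℝ) ≤ γ * L * N)]

/-- For every `γ > 0` there exists `N₀` such that for all integers `N ≥ N₀` and all integers
`n ≥ 10 γ N log N`, the simple random walk on `ℤ` started at `0` satisfies
`P(τ_n < 9 γ N² log N) ≤ N^{-5γ/4}`.  The event `τ_n < T` is expressed as the existence of a
time `t < T` at which the walk equals `n`. -/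
theorem stmt4 (γ : ℝ) (hγ : 0 < γ) :
    ∃ N₀ : ℕ, ∀ N : ℕ, N₀ ≤ N →
    ∀ (Ω : Type) (_ : MeasurableSpace Ω) (P : Measure Ω), IsProbabilityMeasure P →
    ∀ X : ℕ → Ω → ℤ,
      (∀ i, Measurable (X i)) →
      iIndepFun X P →
      (∀ i, P {ω | X i ω = 1} = 1 / 2 ∧ P {ω | X i ω = -1} = 1 / 2) →
    ∀ n : ℤ, 10 * γ * N * Real.log N ≤ (n : ℝ) →
      P {ω | ∃ t : ℕ, (t : ℝ) < 9 * γ * N ^ 2 * Real.log N ∧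
          (∑ i ∈ Finset.range t, X i ω) = n}
        ≤ ENNReal.ofReal ((N : ℝ) ^ (-(5 * γ / 4))) := by
  refine ⟨max 3 ⌈γ⁻¹⌉₊, fun N hN Ω _ P _ X hX hindep hd n hn => ?_⟩
  have hN3 : (3 : ℝ) ≤ N := by exact_mod_cast (le_max_left _ _).trans hN
  have hγN : 1 ≤ γ * N := by
    have : γ⁻¹ ≤ N := (Nat.le_ceil _).trans (by exact_mod_cast (le_max_right _ _).trans hN)
    rwa [inv_le_iff_one_le_mul₀' hγ] at this
  have hL : 1 ≤ log N := by
    rw [le_log_iff_exp_le (by positivity)]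
    linarith [exp_one_lt_d9]
  have hn0 : 0 < (n : ℝ) := lt_of_lt_of_le (by positivity) hn
  set T := 9 * γ * (N : ℝ) ^ 2 * log N
  have hsub : {ω | ∃ t : ℕ, (t : ℝ) < T ∧ (∑ i ∈ range t, X i ω) = n}
      ⊆ {ω | ∃ k ≤ ⌈T⌉₊, (n : ℝ) ≤ ∑ i ∈ range (k + 1), (X i ω : ℝ)} := by
    rintro ω ⟨_ | k, hkT, hk⟩
    · simp [← hk] at hn0
    · have : k + 1 < ⌈T⌉₊ := by exact_mod_cast hkT.trans_le (Nat.le_ceil T)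
      exact ⟨k, by omega, by exact_mod_cast hk.ge⟩
  refine (measure_mono hsub).trans <|
    (measure_exists_le_partialSum_le_exp hX hindep hd hn0.le _).trans (ENNReal.ofReal_le_ofReal ?_)
  rw [rpow_def_of_pos (by positivity), exp_le_exp]
  have := five_mul_div_four_mul_le_sq_div (by linarith) hγN hL hn (by positivity)
    (by linarith [Nat.ceil_lt_add_one (by positivity : 0 ≤ T)] : (⌈T⌉₊ : ℝ) + 1 ≤ T + 2)
  linarith
end

section
/- Fix η ∈ (0,1). There exists N₀ (depending only on η) such that for every integer N ≥ N₀ and every real E* with E* ≥ 40 N² (log N)², the downward-drifted walk started at Δ = 1 − 1/N satisfies: the probability that the walk reaches the interval [E*, ∞) strictly before it reaches (−∞, 0] is at most e^{−N}. Formally, letting τ := inf{k ≥ 0 : S_k ≤ 0 or S_k ≥ E*}, one has P(τ < ∞ and S_τ ≥ E*) ≤ e^{−N}. -/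
/-! The event is contained in `{∃ k, S_k ≥ E*}`, which we bound by a Chernoff argument with
exponent `η`. A step satisfies `E[e^{η ξ}] ≤ e^{-c/N}` with `c = 1 - (1 - η) e^η > 0`, so Markov's
inequality gives `P(S_k ≥ E*) ≤ e^{-η (E* - Δ)} e^{-c k / N}`. Summing the geometric series over
all `k` costs a factor `(1 - e^{-c/N})⁻¹ ≤ 1 + N / c`, which is swamped by
`e^{-η (E* - Δ)} ≤ e^{-η (40 N² - 1)}`. -/

open MeasureTheory ProbabilityTheory ENNReal Finset Real

theorem mul_exp_add_one_sub_mul_exp_le (p t u v : ℝ) :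
    p * exp (t * u) + (1 - p) * exp (t * v) ≤ exp (t * v + p * (exp (t * (u - v)) - 1)) := by
  have hsplit : p * exp (t * u) + (1 - p) * exp (t * v)
      = exp (t * v) * (p * (exp (t * (u - v)) - 1) + 1) := by
    rw [show t * u = t * v + t * (u - v) by ring, exp_add]; ring
  rw [hsplit, exp_add]
  exact mul_le_mul_of_nonneg_left (add_one_le_exp _) (exp_pos _).le

section TwoPoint

variable {Ω : Type*} [MeasurableSpace Ω] {P : Measure Ω} {X : Ω → ℝ} {u v : ℝ}

theorem ae_eq_or_eq_of_measure_add_eq_one [IsProbabilityMeasure P] (hX : Measurable X)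
    (huv : u ≠ v) (h : P {ω | X ω = u} + P {ω | X ω = v} = 1) :
    ∀ᵐ ω ∂P, X ω = u ∨ X ω = v := by
  have hdisj : Disjoint {ω | X ω = u} {ω | X ω = v} :=
    Set.disjoint_left.2 fun ω hu hv => huv (hu.symm.trans hv)
  have hu : MeasurableSet {ω | X ω = u} := hX (measurableSet_singleton u)
  have hv : MeasurableSet {ω | X ω = v} := hX (measurableSet_singleton v)
  change ∀ᵐ ω ∂P, ω ∈ {ω | X ω = u} ∪ {ω | X ω = v}
  rw [ae_mem_iff_measure_eq (hu.union hv).nullMeasurableSet,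
    measure_union hdisj hv, h, measure_univ]

theorem lintegral_comp_eq_of_ae_eq_or_eq (hX : Measurable X) (huv : u ≠ v)
    (h : ∀ᵐ ω ∂P, X ω = u ∨ X ω = v) (f : ℝ → ℝ≥0∞) :
    ∫⁻ ω, f (X ω) ∂P = f u * P {ω | X ω = u} + f v * P {ω | X ω = v} := by
  have hdisj : Disjoint {ω | X ω = u} {ω | X ω = v} :=
    Set.disjoint_left.2 fun ω hu hv => huv (hu.symm.trans hv)
  have hu : MeasurableSet {ω | X ω = u} := hX (measurableSet_singleton u)
  have hv : MeasurableSet {ω | X ω = v} := hX (measurableSet_singleton v)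
  have hfull : P.restrict ({ω | X ω = u} ∪ {ω | X ω = v}) = P :=
    Measure.restrict_eq_self_of_ae_mem h
  conv_lhs => rw [← hfull]
  rw [lintegral_union hv hdisj,
    setLIntegral_congr_fun hu fun ω (hω : X ω = u) => by rw [hω],
    setLIntegral_congr_fun hv fun ω (hω : X ω = v) => by rw [hω],
    setLIntegral_const, setLIntegral_const]

theorem lintegral_exp_mul_le_of_two_point [IsProbabilityMeasure P] (hX : Measurable X)
    (huv : u ≠ v) {p : ℝ} (hp0 : 0 ≤ p) (hp1 : p ≤ 1) (hu : P {ω | X ω = u} = ENNReal.ofReal p)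
    (hv : P {ω | X ω = v} = ENNReal.ofReal (1 - p)) (t : ℝ) :
    ∫⁻ ω, ENNReal.ofReal (exp (t * X ω)) ∂P
      ≤ ENNReal.ofReal (exp (t * v + p * (exp (t * (u - v)) - 1))) := by
  have hae := ae_eq_or_eq_of_measure_add_eq_one hX huv (by
    rw [hu, hv, ← ENNReal.ofReal_add hp0 (by linarith), add_sub_cancel, ENNReal.ofReal_one])
  rw [lintegral_comp_eq_of_ae_eq_or_eq hX huv hae (fun x => ENNReal.ofReal (exp (t * x))), hu, hv,
    ← ENNReal.ofReal_mul (exp_pos _).le, ← ENNReal.ofReal_mul (exp_pos _).le,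
    ← ENNReal.ofReal_add (by positivity) (mul_nonneg (exp_pos _).le (by linarith))]
  exact ENNReal.ofReal_le_ofReal <| by
    linarith [mul_exp_add_one_sub_mul_exp_le p t u v]

end TwoPoint

section Chernoff

variable {Ω ι : Type*} [MeasurableSpace Ω] {P : Measure Ω} {ξ : ι → Ω → ℝ} {t : ℝ} {ρ : ℝ≥0∞}

theorem measure_le_sum_le_of_lintegral_exp_le (hξ : ∀ i, Measurable (ξ i))
    (hind : iIndepFun ξ P) (ht : 0 ≤ t) (hρ : ∀ i, ∫⁻ ω, ENNReal.ofReal (exp (t * ξ i ω)) ∂P ≤ ρ)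
    (a : ℝ) (s : Finset ι) :
    P {ω | a ≤ ∑ i ∈ s, ξ i ω} ≤ ENNReal.ofReal (exp (-(t * a))) * ρ ^ s.card := by
  set g : ι → Ω → ℝ≥0∞ := fun i ω => ENNReal.ofReal (exp (t * ξ i ω))
  have hg : ∀ i, Measurable (g i) := fun i => ((hξ i).const_mul t).exp.ennreal_ofReal
  have hgind : iIndepFun g P :=
    hind.comp _ fun _ => (measurable_id.const_mul t).exp.ennreal_ofReal
  have hsub : {ω | a ≤ ∑ i ∈ s, ξ i ω} ⊆ {ω | ENNReal.ofReal (exp (t * a)) ≤ ∏ i ∈ s, g i ω} := by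
    intro ω hω
    simp only [Set.mem_ofPred_eq, g, ← ENNReal.ofReal_prod_of_nonneg fun i _ => (exp_pos _).le,
      ← exp_sum, ← mul_sum]
    exact ENNReal.ofReal_le_ofReal (exp_le_exp.2 (mul_le_mul_of_nonneg_left hω ht))
  calc P {ω | a ≤ ∑ i ∈ s, ξ i ω}
      ≤ (∫⁻ ω, ∏ i ∈ s, g i ω ∂P) / ENNReal.ofReal (exp (t * a)) :=
        (measure_mono hsub).trans <| meas_ge_le_lintegral_div
          (s.aemeasurable_fun_prod fun i _ => (hg i).aemeasurable)
          (ENNReal.ofReal_pos.2 (exp_pos _)).ne' ENNReal.ofReal_ne_top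
    _ ≤ ρ ^ s.card / ENNReal.ofReal (exp (t * a)) := by
        rw [lintegral_prod_eq_prod_lintegral_of_indepFun s g hgind hg]
        gcongr
        exact prod_le_pow_card s _ ρ fun i _ => hρ i
    _ = ENNReal.ofReal (exp (-(t * a))) * ρ ^ s.card := by
        rw [div_eq_mul_inv, ← ENNReal.ofReal_inv_of_pos (exp_pos _), ← exp_neg, mul_comm]

theorem measure_exists_le_sum_range_le {ξ : ℕ → Ω → ℝ} (hξ : ∀ i, Measurable (ξ i))
    (hind : iIndepFun ξ P) (ht : 0 ≤ t) (hρ : ∀ i, ∫⁻ ω, ENNReal.ofReal (exp (t * ξ i ω)) ∂P ≤ ρ)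
    (a : ℝ) :
    P {ω | ∃ k, a ≤ ∑ i ∈ range k, ξ i ω} ≤ ENNReal.ofReal (exp (-(t * a))) * (1 - ρ)⁻¹ := by
  rw [show {ω | ∃ k, a ≤ ∑ i ∈ range k, ξ i ω} = ⋃ k, {ω | a ≤ ∑ i ∈ range k, ξ i ω} by
    ext; simp, ← ENNReal.tsum_geometric, ← ENNReal.tsum_mul_left]
  refine (measure_iUnion_le _).trans (ENNReal.tsum_le_tsum fun k => ?_)
  simpa using measure_le_sum_le_of_lintegral_exp_le hξ hind ht hρ a (range k)

end Chernoff

theorem ENNReal.inv_one_sub_ofReal_exp_neg_le {x : ℝ} (hx : 0 < x) :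
    (1 - ENNReal.ofReal (exp (-x)))⁻¹ ≤ ENNReal.ofReal (1 + 1 / x) := by
  have hx' : x ≤ exp x - 1 := by linarith [add_one_le_exp x]
  have hpos : 0 < 1 - exp (-x) := by linarith [exp_lt_one_iff.2 (neg_lt_zero.2 hx)]
  rw [← ENNReal.ofReal_one, ← ENNReal.ofReal_sub _ (exp_pos _).le,
    ← ENNReal.ofReal_inv_of_pos hpos]
  refine ENNReal.ofReal_le_ofReal ?_
  have hexp : (1 - exp (-x))⁻¹ = 1 + 1 / (exp x - 1) := by
    have hne : exp x - 1 ≠ 0 := by linarith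
    rw [exp_neg]
    field_simp
    ring
  rw [hexp]
  gcongr

theorem exp_neg_mul_le_exp_neg_of_add_le {y z w : ℝ} (h : z + w ≤ y) :
    exp (-y) * z ≤ exp (-w) :=
  calc exp (-y) * z ≤ exp (-y) * exp (y - w) :=
        mul_le_mul_of_nonneg_left (by linarith [add_one_le_exp (y - w)]) (exp_pos _).le
    _ = exp (-w) := by rw [← exp_add]; ring_nf

noncomputable def driftRate (η : ℝ) : ℝ := 1 - (1 - η) * exp η

theorem driftRate_pos {η : ℝ} (hη : η ≠ 0) : 0 < driftRate η := by
  have h := mul_lt_mul_of_pos_right (one_sub_lt_exp_neg hη) (exp_pos η)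
  rw [← exp_add, neg_add_cancel, exp_zero] at h
  unfold driftRate
  linarith

theorem one_add_div_add_le_mul_sub {η c N E : ℝ} (hη0 : 0 < η) (hη : η < 1) (hN : 3 ≤ N)
    (hNc : 1 / c + 2 ≤ 40 * η * N) (hE : 40 * N ^ 2 * log N ^ 2 ≤ E) :
    1 + N / c + N ≤ η * (E - (1 - 1 / N)) := by
  have hlog : 1 ≤ log N := by
    rw [le_log_iff_exp_le (by linarith)]
    linarith [exp_one_lt_d9]
  have hE' : 40 * N ^ 2 ≤ E :=
    (le_mul_of_one_le_right (by positivity) (one_le_pow₀ hlog)).trans hE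
  have hηN : N / c + 2 * N ≤ 40 * η * N ^ 2 := by
    have := mul_le_mul_of_nonneg_right hNc (by linarith : (0 : ℝ) ≤ N)
    rw [add_mul, one_div_mul_eq_div] at this
    linarith
  nlinarith [mul_le_mul_of_nonneg_left hE' hη0.le,
    mul_pos hη0 (one_div_pos.2 (by linarith : (0 : ℝ) < N))]

/-- Fix `η ∈ (0,1)`.  There exists `N₀` (depending only on `η`) such that for every integer
`N ≥ N₀` and every real `E* ≥ 40 N² (log N)²`, the downward-drifted walk started at
`Δ = 1 − 1/N` satisfies: letting `τ := inf{k ≥ 0 : S_k ≤ 0 or S_k ≥ E*}`, one has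
`P(τ < ∞ and S_τ ≥ E*) ≤ e^{−N}`.  Here `τ < ∞` is expressed as nonemptiness of the set of
which `τ` is the infimum. -/
theorem stmt6 (η : ℝ) (hη0 : 0 < η) (hη1 : η < 1) :
    ∃ N₀ : ℕ, ∀ N : ℕ, N₀ ≤ N →
    ∀ (Ω : Type) (_ : MeasurableSpace Ω) (P : Measure Ω), IsProbabilityMeasure P →
    ∀ ξ : ℕ → Ω → ℝ,
      (∀ i, Measurable (ξ i)) →
      iIndepFun ξ P →
      (∀ i, P {ω | ξ i ω = 1 - 1 / N} = ENNReal.ofReal ((1 - η) / N) ∧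
            P {ω | ξ i ω = -(1 / N)} = ENNReal.ofReal (1 - (1 - η) / N)) →
    ∀ Estar : ℝ, 40 * N ^ 2 * Real.log N ^ 2 ≤ Estar →
    ∀ S : Ω → ℕ → ℝ,
      (∀ ω k, S ω k = (1 - 1 / N) + ∑ i ∈ Finset.range k, ξ i ω) →
    ∀ τ : Ω → ℕ,
      (∀ ω, τ ω = sInf {k : ℕ | S ω k ≤ 0 ∨ Estar ≤ S ω k}) →
      P {ω | {k : ℕ | S ω k ≤ 0 ∨ Estar ≤ S ω k}.Nonempty ∧ Estar ≤ S ω (τ ω)}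
        ≤ ENNReal.ofReal (Real.exp (-(N : ℝ))) := by
  set c := driftRate η
  obtain ⟨n, hn⟩ := exists_nat_ge ((1 / c + 2) / (40 * η))
  refine ⟨max 3 n, fun N hN Ω _ P _ ξ hξ hind hlaw Estar hE S hS τ _ => ?_⟩
  have hN3 : (3 : ℝ) ≤ N := by exact_mod_cast le_of_max_le_left hN
  have hNc : 1 / c + 2 ≤ 40 * η * N := by
    have : (n : ℝ) ≤ N := by exact_mod_cast le_of_max_le_right hN
    linarith [(div_le_iff₀ (by positivity)).1 (hn.trans this)]
  have hstep : ∀ i, ∫⁻ ω, ENNReal.ofReal (exp (η * ξ i ω)) ∂P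
      ≤ ENNReal.ofReal (exp (-(c / N))) := fun i => by
    convert lintegral_exp_mul_le_of_two_point (hξ i) (by linarith) (by positivity)
      ((div_le_one (by positivity)).2 (by linarith)) (hlaw i).1 (hlaw i).2 η using 4
    simp only [c, driftRate, sub_neg_eq_add, sub_add_cancel, mul_one]
    field_simp
    ring
  set a := Estar - (1 - 1 / N)
  have hsub : {ω | {k : ℕ | S ω k ≤ 0 ∨ Estar ≤ S ω k}.Nonempty ∧ Estar ≤ S ω (τ ω)}
      ⊆ {ω | ∃ k, a ≤ ∑ i ∈ range k, ξ i ω} :=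
    fun ω hω => ⟨τ ω, by linarith [hS ω (τ ω), hω.2]⟩
  calc _ ≤ _ := measure_mono hsub
    _ ≤ ENNReal.ofReal (exp (-(η * a))) * (1 - ENNReal.ofReal (exp (-(c / N))))⁻¹ :=
        measure_exists_le_sum_range_le hξ hind hη0.le hstep a
    _ ≤ ENNReal.ofReal (exp (-(η * a))) * ENNReal.ofReal (1 + N / c) := by
        gcongr
        simpa only [one_div_div] using
          ENNReal.inv_one_sub_ofReal_exp_neg_le (div_pos (driftRate_pos hη0.ne') (by positivity))
    _ ≤ ENNReal.ofReal (exp (-N)) := by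
        rw [← ENNReal.ofReal_mul (exp_pos _).le]
        exact ENNReal.ofReal_le_ofReal <| exp_neg_mul_le_exp_neg_of_add_le <|
          one_add_div_add_le_mul_sub hη0 hη1 hN3 hNc hE
end

section
/- Fix η ∈ (0,1). There exists N₀ (depending only on η) such that for every integer N ≥ N₀, every real Δ ≥ 1, and every λ with 0 < λ ≤ η²/(128 N²), the first hitting time T₀ of (−∞, 0] for the downward-drifted walk started at Δ satisfies E[e^{λ T₀}] ≤ (3/2) · exp(2ΔNλ/η). -/
/-!
With Chernoff exponent `η / 2`, every step multiplies the moment generating function by at most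
`exp (-η² / (4N))`, so `P(T₀ > k) ≤ exp (ηΔ / 2 - kη² / (4N))`: a geometric tail beyond
`K = ⌈2ΔN / η⌉`. Integrating `e^{λT} = 1 + ∑_{j < T} (e^λ - 1) e^{λj}` against this tail gives
`E[e^{λT₀}] ≤ e^{λK} (1 + (e^λ - 1) / (1 - e^{λ - η² / (4N)}))`, and for `λ ≤ η² / (128N²)` the
last factor is at most `9 / 8` while `e^{λK} ≤ (4 / 3) e^{2ΔNλ / η}`.
-/

open MeasureTheory ProbabilityTheory ENNReal Real Finset

lemma Nat.lt_sInf_iff {s : Set ℕ} {j : ℕ} : j < sInf s ↔ s.Nonempty ∧ ∀ k ≤ j, k ∉ s := by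
  refine ⟨fun h => ⟨Nat.nonempty_of_pos_sInf (by omega), fun k hk hks => ?_⟩, ?_⟩
  · exact absurd (Nat.sInf_le hks) (by omega)
  · rintro ⟨hne, hs⟩
    by_contra! h
    exact hs _ h (Nat.sInf_mem hne)

section

variable {Ω : Type*} [MeasurableSpace Ω] {μ : Measure Ω}

lemma measurable_sInf_setOf {p : ℕ → Ω → Prop} (hp : ∀ k, MeasurableSet {ω | p k ω}) :
    Measurable fun ω => sInf {k | p k ω} := by
  refine measurable_of_Ioi fun j => ?_
  have : (fun ω => sInf {k | p k ω}) ⁻¹' Set.Ioi j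
      = (⋃ m, {ω | p m ω}) ∩ ⋂ k, ⋂ (_ : k ≤ j), {ω | p k ω}ᶜ := by
    ext ω
    simp [Nat.lt_sInf_iff, Set.Nonempty]
  rw [this]
  exact (MeasurableSet.iUnion hp).inter (.iInter fun k => .iInter fun _ => (hp k).compl)

section LayerCake

variable {T : Ω → ℕ}

lemma lintegral_sum_range_eq_tsum (hT : Measurable T) (d : ℕ → ℝ≥0∞) :
    ∫⁻ ω, ∑ j ∈ range (T ω), d j ∂μ = ∑' j, d j * μ {ω | j < T ω} := by
  have hset : ∀ j, MeasurableSet {ω | j < T ω} := fun j => hT measurableSet_Ioi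
  have hsum : ∀ ω, ∑ j ∈ range (T ω), d j = ∑' j, {ω | j < T ω}.indicator (fun _ => d j) ω := by
    intro ω
    rw [tsum_eq_sum (s := range (T ω)) fun j hj => by simp_all]
    exact sum_congr rfl fun j hj => by simp_all
  simp_rw [hsum]
  rw [lintegral_tsum fun j => (measurable_const.indicator (hset j)).aemeasurable]
  exact tsum_congr fun j => lintegral_indicator_const (hset j) _

lemma ofReal_pow_eq_one_add_sum {r : ℝ} (hr : 1 ≤ r) (m : ℕ) :
    ENNReal.ofReal (r ^ m) = 1 + ∑ j ∈ range m, ENNReal.ofReal ((r - 1) * r ^ j) := by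
  have hterm : ∀ j, 0 ≤ (r - 1) * r ^ j := fun j => by have := one_le_pow₀ (n := j) hr; nlinarith
  rw [← ENNReal.ofReal_sum_of_nonneg fun j _ => hterm j, ← ENNReal.ofReal_one,
    ← ENNReal.ofReal_add zero_le_one (sum_nonneg fun j _ => hterm j), ← mul_sum, mul_comm,
    geom_sum_mul]
  ring_nf

lemma lintegral_pow_le_of_measure_lt_le [IsProbabilityMeasure μ] (hT : Measurable T) {r q : ℝ}
    (hr : 1 ≤ r) (hq : 0 ≤ q) (hrq : r * q < 1)
    (htail : ∀ i, μ {ω | i < T ω} ≤ ENNReal.ofReal (q ^ i)) :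
    ∫⁻ ω, ENNReal.ofReal (r ^ T ω) ∂μ ≤ ENNReal.ofReal (1 + (r - 1) / (1 - r * q)) := by
  have hrq0 : 0 ≤ r * q := by positivity
  have hterm : ∀ j : ℕ, 0 ≤ (r - 1) * (r * q) ^ j := fun j => by
    have := pow_nonneg hrq0 j; nlinarith
  have hgeom : HasSum (fun j : ℕ => (r - 1) * (r * q) ^ j) ((r - 1) / (1 - r * q)) := by
    simpa [div_eq_mul_inv] using (hasSum_geometric_of_lt_one hrq0 hrq).mul_left (r - 1)
  simp_rw [ofReal_pow_eq_one_add_sum hr]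
  rw [lintegral_add_left measurable_const, lintegral_const, measure_univ, mul_one,
    lintegral_sum_range_eq_tsum hT, ENNReal.ofReal_add zero_le_one (hgeom.nonneg hterm),
    ENNReal.ofReal_one, ← hgeom.tsum_eq, ENNReal.ofReal_tsum_of_nonneg hterm hgeom.summable]
  gcongr with j
  calc ENNReal.ofReal ((r - 1) * r ^ j) * μ {ω | j < T ω}
      ≤ ENNReal.ofReal ((r - 1) * r ^ j) * ENNReal.ofReal (q ^ j) := by gcongr; exact htail j
    _ = ENNReal.ofReal ((r - 1) * (r * q) ^ j) := by
      rw [← ENNReal.ofReal_mul (by have := one_le_pow₀ (n := j) hr; nlinarith)]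
      ring_nf

lemma lintegral_pow_le_of_measure_add_lt_le [IsProbabilityMeasure μ] (hT : Measurable T)
    {r q : ℝ} (hr : 1 ≤ r) (hq : 0 ≤ q) (hrq : r * q < 1) (K : ℕ)
    (htail : ∀ i, μ {ω | K + i < T ω} ≤ ENNReal.ofReal (q ^ i)) :
    ∫⁻ ω, ENNReal.ofReal (r ^ T ω) ∂μ ≤ ENNReal.ofReal (r ^ K * (1 + (r - 1) / (1 - r * q))) := by
  have hsplit : ∀ ω, ENNReal.ofReal (r ^ T ω)
      ≤ ENNReal.ofReal (r ^ K) * ENNReal.ofReal (r ^ (T ω - K)) := by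
    intro ω
    rw [← ENNReal.ofReal_mul (by positivity), ← pow_add]
    exact ENNReal.ofReal_le_ofReal (pow_le_pow_right₀ hr (by omega))
  have hshift : ∀ i, μ {ω | i < T ω - K} ≤ ENNReal.ofReal (q ^ i) := fun i => by
    simpa only [Nat.lt_sub_iff_add_lt'] using htail i
  calc ∫⁻ ω, ENNReal.ofReal (r ^ T ω) ∂μ
      ≤ ∫⁻ ω, ENNReal.ofReal (r ^ K) * ENNReal.ofReal (r ^ (T ω - K)) ∂μ := lintegral_mono hsplit
    _ = ENNReal.ofReal (r ^ K) * ∫⁻ ω, ENNReal.ofReal (r ^ (T ω - K)) ∂μ :=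
      lintegral_const_mul' _ _ ENNReal.ofReal_ne_top
    _ ≤ ENNReal.ofReal (r ^ K) * ENNReal.ofReal (1 + (r - 1) / (1 - r * q)) := by
      gcongr
      exact lintegral_pow_le_of_measure_lt_le (hT.sub_const K) hr hq hrq hshift
    _ = _ := (ENNReal.ofReal_mul (by positivity)).symm

end LayerCake

section TwoPoint

variable {X : Ω → ℝ} {a b : ℝ}

lemma ae_eq_or_eq_of_measure_add_measure_eq_one [IsProbabilityMeasure μ] (hX : Measurable X)
    (hab : a ≠ b) (h : μ {ω | X ω = a} + μ {ω | X ω = b} = 1) :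
    ∀ᵐ ω ∂μ, X ω = a ∨ X ω = b := by
  have hA : MeasurableSet {ω | X ω = a} := hX (measurableSet_singleton a)
  have hB : MeasurableSet {ω | X ω = b} := hX (measurableSet_singleton b)
  have hdisj : Disjoint {ω | X ω = a} {ω | X ω = b} :=
    Set.disjoint_left.2 fun ω ha hb => hab (ha.symm.trans hb)
  rw [← measure_union hdisj hB, ← prob_compl_eq_zero_iff (hA.union hB)] at h
  exact measure_mono_null (fun ω hω => by simpa [not_or] using hω) h

lemma integral_comp_eq_of_ae_eq_or_eq [IsFiniteMeasure μ] (hX : Measurable X) (hab : a ≠ b)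
    (hae : ∀ᵐ ω ∂μ, X ω = a ∨ X ω = b) (g : ℝ → ℝ) :
    ∫ ω, g (X ω) ∂μ = g a * μ.real {ω | X ω = a} + g b * μ.real {ω | X ω = b} := by
  have hA : MeasurableSet {ω | X ω = a} := hX (measurableSet_singleton a)
  have hB : MeasurableSet {ω | X ω = b} := hX (measurableSet_singleton b)
  have hcongr : (fun ω => g (X ω)) =ᵐ[μ]
      {ω | X ω = a}.indicator (fun _ => g a) + {ω | X ω = b}.indicator (fun _ => g b) := by
    filter_upwards [hae] with ω hω
    rcases hω with h | h <;> simp [Set.indicator, h, hab, hab.symm]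
  rw [integral_congr_ae hcongr, integral_add' ((integrable_const _).indicator hA)
    ((integrable_const _).indicator hB), integral_indicator_const _ hA,
    integral_indicator_const _ hB, smul_eq_mul, smul_eq_mul, mul_comm, mul_comm (μ.real _)]

end TwoPoint

section Walk

variable {ξ : ℕ → Ω → ℝ} {t m : ℝ}

lemma measureReal_le_sum_range_le [IsFiniteMeasure μ] (hξ : ∀ i, Measurable (ξ i))
    (hind : iIndepFun ξ μ) (ht : 0 ≤ t) (hint : ∀ i, Integrable (fun ω => exp (t * ξ i ω)) μ)
    (hmgf : ∀ i, mgf (ξ i) μ t ≤ m) (ε : ℝ) (k : ℕ) :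
    μ.real {ω | ε ≤ ∑ i ∈ range k, ξ i ω} ≤ exp (-t * ε) * m ^ k := by
  have hchernoff := measure_ge_le_exp_mul_mgf (X := ∑ i ∈ range k, ξ i) ε ht
    (hind.integrable_exp_mul_sum hξ fun i _ => hint i)
  simp only [hind.mgf_sum hξ, Finset.sum_apply] at hchernoff
  refine hchernoff.trans (mul_le_mul_of_nonneg_left ?_ (exp_nonneg _))
  calc ∏ i ∈ range k, mgf (ξ i) μ t ≤ ∏ _i ∈ range k, m :=
        prod_le_prod (fun i _ => mgf_nonneg) fun i _ => hmgf i
    _ = m ^ k := by simp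

lemma measure_lt_sInf_le [IsFiniteMeasure μ] (hξ : ∀ i, Measurable (ξ i))
    (hind : iIndepFun ξ μ) (ht : 0 ≤ t) (hint : ∀ i, Integrable (fun ω => exp (t * ξ i ω)) μ)
    (hmgf : ∀ i, mgf (ξ i) μ t ≤ m) (Δ : ℝ) (k : ℕ) :
    μ {ω | k < sInf {j | Δ + ∑ i ∈ range j, ξ i ω ≤ 0}} ≤ ENNReal.ofReal (exp (t * Δ) * m ^ k) := by
  calc μ {ω | k < sInf {j | Δ + ∑ i ∈ range j, ξ i ω ≤ 0}}
      ≤ μ {ω | -Δ ≤ ∑ i ∈ range k, ξ i ω} := measure_mono fun ω hω => by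
        have := Nat.notMem_of_lt_sInf hω
        simp only [Set.mem_ofPred_eq, not_le] at this ⊢
        linarith
    _ = ENNReal.ofReal (μ.real {ω | -Δ ≤ ∑ i ∈ range k, ξ i ω}) :=
        (ofReal_measureReal (measure_ne_top _ _)).symm
    _ ≤ _ := ENNReal.ofReal_le_ofReal <| by
        simpa using measureReal_le_sum_range_le hξ hind ht hint hmgf (-Δ) k

lemma lintegral_exp_mul_sInf_le [IsProbabilityMeasure μ] (hξ : ∀ i, Measurable (ξ i))
    (hind : iIndepFun ξ μ) (ht : 0 ≤ t) (hint : ∀ i, Integrable (fun ω => exp (t * ξ i ω)) μ)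
    {c : ℝ} (hmgf : ∀ i, mgf (ξ i) μ t ≤ exp (-c)) {l : ℝ} (hl : 0 ≤ l) (hlc : l < c) (Δ : ℝ) :
    ∫⁻ ω, ENNReal.ofReal (exp (l * sInf {j | Δ + ∑ i ∈ range j, ξ i ω ≤ 0})) ∂μ
      ≤ ENNReal.ofReal (exp l ^ ⌈t * Δ / c⌉₊ * (1 + (exp l - 1) / (1 - exp l * exp (-c)))) := by
  set K := ⌈t * Δ / c⌉₊
  have hc : 0 < c := hl.trans_lt hlc
  have hKc : t * Δ ≤ K * c := (div_le_iff₀ hc).1 (Nat.le_ceil _)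
  have hT : Measurable fun ω => sInf {j | Δ + ∑ i ∈ range j, ξ i ω ≤ 0} :=
    measurable_sInf_setOf fun j =>
      measurableSet_le (measurable_const.add (Finset.measurable_sum _ fun i _ => hξ i))
        measurable_const
  have htail : ∀ i, μ {ω | K + i < sInf {j | Δ + ∑ i ∈ range j, ξ i ω ≤ 0}}
      ≤ ENNReal.ofReal (exp (-c) ^ i) := fun i => by
    refine (measure_lt_sInf_le hξ hind ht hint hmgf Δ (K + i)).trans (ENNReal.ofReal_le_ofReal ?_)
    rw [← exp_nat_mul, ← exp_nat_mul, ← exp_add]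
    gcongr
    push_cast
    linarith
  simp_rw [mul_comm l, exp_nat_mul]
  refine lintegral_pow_le_of_measure_add_lt_le hT (one_le_exp hl) (exp_nonneg _) ?_ K htail
  rw [← exp_add, exp_lt_one_iff]
  linarith

end Walk

end

lemma two_point_mgf_le {η n : ℝ} (hη0 : 0 < η) (hη1 : η < 1) (hn : 0 < n) :
    exp (η / 2 * (1 - 1 / n)) * ((1 - η) / n) + exp (η / 2 * -(1 / n)) * (1 - (1 - η) / n)
      ≤ exp (-(η ^ 2 / (4 * n))) := by
  set t := η / 2 with ht
  set p := (1 - η) / n with hp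
  have hp0 : 0 ≤ p := div_nonneg (by linarith) hn.le
  have hquad : exp t - 1 ≤ t + t ^ 2 := by
    have := abs_exp_sub_one_sub_id_le (x := t) (by rw [abs_le]; constructor <;> linarith)
    linarith [le_abs_self (exp t - 1 - t)]
  calc _ = exp (-(t / n)) * (1 + p * (exp t - 1)) := by
        rw [show t * (1 - 1 / n) = t + -(t / n) by ring, show t * -(1 / n) = -(t / n) by ring,
          exp_add]
        ring
    _ ≤ exp (-(t / n)) * exp (p * (exp t - 1)) := by
        gcongr; linarith [add_one_le_exp (p * (exp t - 1))]
    _ = exp (-(t / n) + p * (exp t - 1)) := (exp_add _ _).symm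
    _ ≤ _ := by
      gcongr
      calc -(t / n) + p * (exp t - 1) ≤ -(t / n) + p * (t + t ^ 2) := by gcongr
        _ = -(η ^ 2 / (4 * n)) - η ^ 3 / (4 * n) := by rw [ht, hp]; field_simp; ring
        _ ≤ _ := by linarith [show 0 ≤ η ^ 3 / (4 * n) by positivity]

lemma exp_sub_one_div_one_sub_exp_le {l c : ℝ} (hl : 0 ≤ l) (hlc : 2 * l ≤ c) (hc0 : 0 < c)
    (hc : c ≤ 1 / 2) : (exp l - 1) / (1 - exp l * exp (-c)) ≤ 8 * l / c := by
  have hnum : exp l - 1 ≤ 2 * l := by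
    have := abs_exp_sub_one_le (x := l) (by rw [abs_of_nonneg hl]; linarith)
    rw [abs_of_nonneg hl] at this
    linarith [le_abs_self (exp l - 1)]
  have hden : c / 4 ≤ 1 - exp l * exp (-c) := by
    have := abs_exp_sub_one_sub_id_le (x := l - c) (by rw [abs_le]; constructor <;> linarith)
    rw [← exp_add, ← sub_eq_add_neg]
    nlinarith [le_abs_self (exp (l - c) - 1 - (l - c))]
  calc (exp l - 1) / (1 - exp l * exp (-c)) ≤ 2 * l / (c / 4) :=
        div_le_div₀ (by linarith) hnum (by positivity) hden
    _ = 8 * l / c := by field_simp; ring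

lemma exp_pow_ceil_mul_le {l c a : ℝ} (hl : 0 < l) (hlc : 64 * l ≤ c) (hc : c ≤ 1 / 2)
    (ha : 0 ≤ a) : exp l ^ ⌈a⌉₊ * (1 + (exp l - 1) / (1 - exp l * exp (-c)))
      ≤ 3 / 2 * exp (a * l) := by
  have hpow : exp l ^ ⌈a⌉₊ ≤ exp (a * l) * exp l := by
    rw [← exp_nat_mul, ← exp_add]
    gcongr
    nlinarith [Nat.ceil_lt_add_one ha]
  have hexp : exp l ≤ 4 / 3 := by
    have := abs_exp_sub_one_le (x := l) (by rw [abs_of_pos hl]; linarith)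
    rw [abs_of_pos hl] at this
    linarith [le_abs_self (exp l - 1)]
  have hratio : (exp l - 1) / (1 - exp l * exp (-c)) ≤ 1 / 8 := by
    refine (exp_sub_one_div_one_sub_exp_le hl.le (by linarith) (by linarith) hc).trans ?_
    rw [div_le_div_iff₀ (by linarith) (by norm_num)]
    linarith
  calc exp l ^ ⌈a⌉₊ * (1 + (exp l - 1) / (1 - exp l * exp (-c)))
      ≤ exp l ^ ⌈a⌉₊ * (1 + 1 / 8) := by gcongr
    _ ≤ (exp (a * l) * (4 / 3)) * (1 + 1 / 8) := by gcongr; exact hpow.trans (by gcongr)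
    _ = 3 / 2 * exp (a * l) := by ring

/-- Fix `η ∈ (0,1)`.  There exists `N₀` (depending only on `η`) such that for every integer
`N ≥ N₀`, every real `Δ ≥ 1`, and every `λ` with `0 < λ ≤ η²/(128 N²)`, the first hitting
time `T₀ := inf{k ≥ 0 : S_k ≤ 0}` of `(−∞,0]` for the downward-drifted walk started at `Δ`
satisfies `E[e^{λ T₀}] ≤ (3/2) · exp(2ΔNλ/η)`.  The expectation is taken as a Lebesgue
(lower) integral, and `T₀` is the (ℕ-valued) infimum of the hitting set. -/
theorem stmt8 (η : ℝ) (hη0 : 0 < η) (hη1 : η < 1) :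
    ∃ N₀ : ℕ, ∀ N : ℕ, N₀ ≤ N →
    ∀ (Ω : Type) (_ : MeasurableSpace Ω) (P : Measure Ω), IsProbabilityMeasure P →
    ∀ ξ : ℕ → Ω → ℝ,
      (∀ i, Measurable (ξ i)) →
      iIndepFun ξ P →
      (∀ i, P {ω | ξ i ω = 1 - 1 / N} = ENNReal.ofReal ((1 - η) / N) ∧
            P {ω | ξ i ω = -(1 / N)} = ENNReal.ofReal (1 - (1 - η) / N)) →
    ∀ Δ : ℝ, 1 ≤ Δ →
    ∀ lam : ℝ, 0 < lam → lam ≤ η ^ 2 / (128 * N ^ 2) →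
    ∀ T₀ : Ω → ℕ,
      (∀ ω, T₀ ω = sInf {k : ℕ | Δ + ∑ i ∈ Finset.range k, ξ i ω ≤ 0}) →
      (∫⁻ ω, ENNReal.ofReal (Real.exp (lam * T₀ ω)) ∂P)
        ≤ ENNReal.ofReal ((3 / 2) * Real.exp (2 * Δ * N * lam / η)) := by
  refine ⟨2, fun N hN Ω _ P _ ξ hξ hind hdist Δ hΔ lam hlam0 hlam T₀ hT₀ => ?_⟩
  have hn : (2 : ℝ) ≤ N := by exact_mod_cast hN
  set n : ℝ := (N : ℝ)
  have hp0 : 0 ≤ (1 - η) / n := div_nonneg (by linarith) (by positivity)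
  have hp1 : 0 ≤ 1 - (1 - η) / n := by
    rw [sub_nonneg, div_le_one (by positivity)]
    linarith
  have hab : (1 - 1 / n : ℝ) ≠ -(1 / n) := by
    intro h
    linarith
  have hae : ∀ i, ∀ᵐ ω ∂P, ξ i ω = 1 - 1 / n ∨ ξ i ω = -(1 / n) := fun i =>
    ae_eq_or_eq_of_measure_add_measure_eq_one (hξ i) hab <| by
      rw [(hdist i).1, (hdist i).2, ← ENNReal.ofReal_add hp0 hp1, add_sub_cancel,
        ENNReal.ofReal_one]
  have hmgf : ∀ i, mgf (ξ i) P (η / 2) ≤ exp (-(η ^ 2 / (4 * n))) := fun i => by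
    rw [mgf, integral_comp_eq_of_ae_eq_or_eq (hξ i) hab (hae i) (fun x => exp (η / 2 * x)),
      measureReal_def, measureReal_def, (hdist i).1, (hdist i).2, ENNReal.toReal_ofReal hp0,
      ENNReal.toReal_ofReal hp1]
    exact two_point_mgf_le hη0 hη1 (by positivity)
  have hint : ∀ i, Integrable (fun ω => exp (η / 2 * ξ i ω)) P := fun i =>
    integrable_exp_mul_of_le _ 1 (by positivity) (hξ i).aemeasurable <| by
      filter_upwards [hae i] with ω h
      rcases h with h | h <;> rw [h] <;> linarith [one_div_pos.2 (show 0 < n by positivity)]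
  have hlamc : 64 * lam ≤ η ^ 2 / (4 * n) := by
    calc 64 * lam ≤ 64 * (η ^ 2 / (128 * n ^ 2)) := by gcongr
      _ = η ^ 2 / (4 * n) * (2 / n) := by field_simp; ring
      _ ≤ η ^ 2 / (4 * n) :=
        mul_le_of_le_one_right (by positivity) ((div_le_one (by positivity)).2 hn)
  have hc : η ^ 2 / (4 * n) ≤ 1 / 2 := by
    rw [div_le_iff₀ (by positivity)]
    nlinarith
  have hK : η / 2 * Δ / (η ^ 2 / (4 * n)) = 2 * Δ * n / η := by
    field_simp
    ring
  simp_rw [hT₀]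
  refine (lintegral_exp_mul_sInf_le hξ hind (by positivity) hint hmgf hlam0.le
    (by linarith) Δ).trans (ENNReal.ofReal_le_ofReal ?_)
  rw [hK, show 2 * Δ * n * lam / η = 2 * Δ * n / η * lam by ring]
  exact exp_pow_ceil_mul_le hlam0 hlamc hc (by positivity)
end

section
/- Let N > 0 be a real number, h₀ ∈ ℕ, and let μ : ℕ × ℕ → ℝ (written μ_k(t)) satisfy: (i) μ_k(t) ≥ 0 for all k, t; (ii) μ_{h₀}(t) ≤ N for all t; (iii) μ_k(0) = 0 for all k > h₀; (iv) μ_k(t+1) − μ_k(t) ≤ μ_{k−1}(t)/N for all k > h₀ and all t ≥ 0. Then for every k > h₀ and every t ≥ 0, μ_k(t) ≤ (1/N)^{k−h₀−1} · t^{k−h₀} / (k−h₀)!. -/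
lemma aux_pow (d t : ℕ) (hd : 1 ≤ d) : t ^ d + d * t ^ (d - 1) ≤ (t + 1) ^ d := by
  induction d with
  | zero => omega
  | succ e ih =>
    rcases Nat.eq_zero_or_pos e with he | he
    · subst he; simp
    · have ih' := ih he
      have ht : t ^ (e - 1) * t = t ^ e := by
        rw [← pow_succ]; congr 1; omega
      have expand : (t ^ e + e * t ^ (e - 1)) * (t + 1)
          = t ^ (e + 1) + t ^ e + e * t ^ e + e * t ^ (e - 1) := by
        calc (t ^ e + e * t ^ (e - 1)) * (t + 1)
            = t ^ e * t + t ^ e + e * (t ^ (e - 1) * t) + e * t ^ (e - 1) := by ring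
          _ = t ^ (e + 1) + t ^ e + e * t ^ e + e * t ^ (e - 1) := by
              rw [ht, ← pow_succ]
      have h1 : t ^ (e + 1) + (e + 1) * t ^ (e + 1 - 1)
          ≤ (t ^ e + e * t ^ (e - 1)) * (t + 1) := by
        simp only [Nat.add_sub_cancel, expand, Nat.succ_mul]
        omega
      calc t ^ (e + 1) + (e + 1) * t ^ (e + 1 - 1)
          ≤ (t ^ e + e * t ^ (e - 1)) * (t + 1) := h1
        _ ≤ (t + 1) ^ e * (t + 1) := Nat.mul_le_mul_right _ ih'
        _ = (t + 1) ^ (e + 1) := by ring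

/-- Let `N > 0` be a real number, `h₀ ∈ ℕ`, and `μ : ℕ × ℕ → ℝ` (written `μ k t`) satisfy:
(i) `μ k t ≥ 0`; (ii) `μ h₀ t ≤ N`; (iii) `μ k 0 = 0` for `k > h₀`;
(iv) `μ k (t+1) − μ k t ≤ μ (k−1) t / N` for `k > h₀`.
Then for every `k > h₀` and every `t ≥ 0`,
`μ k t ≤ (1/N)^{k−h₀−1} · t^{k−h₀} / (k−h₀)!`. -/
theorem stmt12
    (N : ℝ) (hN : 0 < N) (h₀ : ℕ) (μ : ℕ → ℕ → ℝ)
    (h1 : ∀ k t, 0 ≤ μ k t)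
    (h2 : ∀ t, μ h₀ t ≤ N)
    (h3 : ∀ k, h₀ < k → μ k 0 = 0)
    (h4 : ∀ k t, h₀ < k → μ k (t + 1) - μ k t ≤ μ (k - 1) t / N) :
    ∀ k t, h₀ < k →
      μ k t ≤ (1 / N) ^ (k - h₀ - 1) * (t : ℝ) ^ (k - h₀) / (Nat.factorial (k - h₀)) := by
  have main : ∀ d, 1 ≤ d → ∀ t,
      μ (h₀ + d) t ≤ (1 / N) ^ (d - 1) * (t : ℝ) ^ d / (Nat.factorial d) := by
    intro d
    induction d with
    | zero => omega
    | succ e ih =>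
      intro _ t
      induction t with
      | zero =>
        rw [h3 (h₀ + (e + 1)) (by omega)]
        simp [ne_of_gt (Nat.factorial_pos (e+1))]
      | succ s ihs =>
        have step := h4 (h₀ + (e + 1)) s (by omega)
        have hk1 : h₀ + (e + 1) - 1 = h₀ + e := by omega
        rw [hk1] at step
        have hfac : (0 : ℝ) < (Nat.factorial (e + 1) : ℝ) := by
          exact_mod_cast Nat.factorial_pos _
        have hpow : (0:ℝ) < (1 / N) ^ e := by positivity
        have hinc : μ (h₀ + e) s / N
            ≤ (1 / N) ^ e * (((e:ℝ) + 1) * (s:ℝ) ^ e) / (Nat.factorial (e + 1)) := by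
          rcases Nat.eq_zero_or_pos e with he | he
          · subst he
            have hμ : μ (h₀ + 0) s ≤ N := by simpa using h2 s
            norm_num
            rw [div_le_one hN]
            exact hμ
          · have ihe := ih he s
            have hNe : (1 / N) ^ (e - 1) / N = (1 / N) ^ e := by
              rw [div_eq_mul_one_div, ← pow_succ]
              congr 1; omega
            have hfe : (Nat.factorial (e + 1) : ℝ) = ((e:ℝ) + 1) * (Nat.factorial e : ℝ) := by
              push_cast [Nat.factorial_succ]; ring
            have hfeps : (0:ℝ) < (Nat.factorial e : ℝ) := by exact_mod_cast Nat.factorial_pos e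
            calc μ (h₀ + e) s / N
                ≤ ((1 / N) ^ (e - 1) * (s:ℝ) ^ e / (Nat.factorial e)) / N := by
                  gcongr
              _ = (1 / N) ^ (e - 1) / N * (s:ℝ) ^ e / (Nat.factorial e) := by ring
              _ = (1 / N) ^ e * (s:ℝ) ^ e / (Nat.factorial e) := by rw [hNe]
              _ = (1 / N) ^ e * (((e:ℝ) + 1) * (s:ℝ) ^ e) / (Nat.factorial (e + 1)) := by
                  rw [hfe]
                  field_simp
        have hpowle : ((s:ℝ) ^ (e+1) + ((e:ℝ) + 1) * (s:ℝ) ^ e) ≤ ((s:ℝ) + 1) ^ (e + 1) := by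
          have h' : s ^ (e + 1) + (e + 1) * s ^ e ≤ (s + 1) ^ (e + 1) := by
            simpa using aux_pow (e + 1) s (by omega)
          exact_mod_cast h'
        have key : μ (h₀ + (e + 1)) (s + 1)
            ≤ (1 / N) ^ e * ((s:ℝ) ^ (e+1) + ((e:ℝ) + 1) * (s:ℝ) ^ e) / (Nat.factorial (e + 1)) := by
          have hs := ihs
          simp only [Nat.add_sub_cancel] at hs
          have expand : (1 / N) ^ e * ((s:ℝ) ^ (e+1) + ((e:ℝ) + 1) * (s:ℝ) ^ e) / (Nat.factorial (e + 1))
              = (1 / N) ^ e * (s:ℝ) ^ (e+1) / (Nat.factorial (e + 1))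
                + (1 / N) ^ e * (((e:ℝ) + 1) * (s:ℝ) ^ e) / (Nat.factorial (e + 1)) := by
            ring
          rw [expand]
          linarith [step, hs, hinc]
        simp only [Nat.add_sub_cancel]
        calc μ (h₀ + (e + 1)) (s + 1)
            ≤ (1 / N) ^ e * ((s:ℝ) ^ (e+1) + ((e:ℝ) + 1) * (s:ℝ) ^ e) / (Nat.factorial (e + 1)) := key
          _ ≤ (1 / N) ^ e * ((s:ℝ) + 1) ^ (e + 1) / (Nat.factorial (e + 1)) := by
              gcongr
          _ = (1 / N) ^ e * ((s + 1 : ℕ) : ℝ) ^ (e + 1) / (Nat.factorial (e + 1)) := by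
              push_cast; ring
  intro k t hk
  have hd : k = h₀ + (k - h₀) := by omega
  have := main (k - h₀) (by omega) t
  rw [hd]
  simpa using this
end
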